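/- arXiv:1508.03831 — 7 statements merged into one kernel-verified Lean document; each statement's English description precedes it below -/
import Mathlib

section
/- Let κ be an uncountable regular cardinal and λ ≥ κ a cardinal with λ^{<κ} = λ. If Q is a partial order satisfying the κ-chain condition, P is a subset of Q of cardinality at most λ, and C is a club in P_κ(Q), then there is a regular suborder P' of Q of cardinality at most λ such that P ⊆ P' and C ∩ P_κ(P') is club in P_κ(P'). -/
universe u v

open Cardinal

namespace Layered

variable {P : Type u}

section
variable [PartialOrder P]

/-- Two conditions are compatible if they have a common lower bound. -/
def Compat (p q : P) : Prop := ∃ r, r ≤ p ∧ r ≤ q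

/-- Compatibility witnessed inside a suborder `S`. -/
def CompatIn (S : Set P) (p q : P) : Prop := ∃ r ∈ S, r ≤ p ∧ r ≤ q

/-- An antichain: a set of pairwise incompatible conditions. -/
def IsPOAntichain (A : Set P) : Prop := ∀ p ∈ A, ∀ q ∈ A, p ≠ q → ¬ Compat p q

/-- A maximal antichain: every condition is compatible with some member. -/
def IsMaxAntichain (A : Set P) : Prop := IsPOAntichain A ∧ ∀ p : P, ∃ q ∈ A, Compat p q

/-- `S` is a regular suborder of `P`: the inclusion preserves incompatibility and
maximal antichains of `S` are maximal antichains of `P`. -/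
def RegularSuborder (S : Set P) : Prop :=
  (∀ p ∈ S, ∀ q ∈ S, Compat p q → CompatIn S p q) ∧
  ∀ A ⊆ S, (∀ p ∈ A, ∀ q ∈ A, p ≠ q → ¬ CompatIn S p q) →
    (∀ p ∈ S, ∃ q ∈ A, CompatIn S p q) → ∀ p : P, ∃ q ∈ A, Compat p q

/-- `Reg_κ(P)`: regular suborders of size less than `κ`. -/
def RegSub (κ : Cardinal.{u}) (S : Set P) : Prop := RegularSuborder S ∧ #S < κ

end

/-- `P` satisfies the `κ`-chain condition. -/
def CC (κ : Cardinal.{u}) (P : Type u) [PartialOrder P] : Prop :=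
  ∀ A : Set P, IsPOAntichain A → #A < κ

/-- `P` is `κ`-Knaster. -/
def Knaster (κ : Cardinal.{u}) (P : Type u) [PartialOrder P] : Prop :=
  ∀ A : Set P, #A = κ → ∃ B ⊆ A, #B = κ ∧ ∀ p ∈ B, ∀ q ∈ B, Compat p q

/-- A club in `P_κ(Y)` for `Y` a subset of `X`: a collection of subsets of `Y` of size `< κ`
that is `⊆`-cofinal among such sets and closed under unions of `⊆`-chains of length `< κ`. -/
def SubClub (κ : Cardinal.{u}) {X : Type u} (Y : Set X) (C : Set (Set X)) : Prop :=
  (∀ c ∈ C, c ⊆ Y ∧ #c < κ) ∧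
  (∀ a : Set X, a ⊆ Y → #a < κ → ∃ c ∈ C, a ⊆ c) ∧
  ∀ D : Set (Set X), D.Nonempty → D ⊆ C → IsChain (· ⊆ ·) D → #D < κ → ⋃₀ D ∈ C

/-- A club in `P_κ(X)`. -/
def PkClub (κ : Cardinal.{u}) {X : Type u} (C : Set (Set X)) : Prop :=
  SubClub κ Set.univ C

/-- A stationary subset of `P_κ(X)` (Jech's notion): one meeting every club. -/
def PkStat (κ : Cardinal.{u}) {X : Type u} (S : Set (Set X)) : Prop :=
  ∀ C : Set (Set X), PkClub κ C → (S ∩ C).Nonempty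

/-- `P` is `κ`-stationarily layered: `Reg_κ(P)` is stationary in `P_κ(P)`. -/
def StationarilyLayered (κ : Cardinal.{u}) (P : Type u) [PartialOrder P] : Prop :=
  PkStat κ {S : Set P | RegSub κ S}

/-- `P` is `<κ`-linked: there is a colouring of `P` by fewer than `κ` colours
that is injective on antichains. -/
def LtLinked (κ : Cardinal.{u}) (P : Type u) [PartialOrder P] : Prop :=
  ∃ (C : Type u) (c : P → C), #C < κ ∧
    ∀ p q : P, c p = c q → Compat p q

/-- `κ` is weakly compact: `κ` is uncountable and `κ → (κ)²_μ` holds for all `μ < κ`. -/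
def WeaklyCompact (κ : Cardinal.{u}) : Prop :=
  ℵ₀ < κ ∧ ∀ (C : Type u) (c : κ.ord.ToType → κ.ord.ToType → C), #C < κ →
    ∃ H : Set κ.ord.ToType, #H = κ ∧ ∃ d : C, ∀ a ∈ H, ∀ b ∈ H, a < b → c a b = d

/-- A normal (fine, `<κ`-complete by normality) filter on `P_κ(X)`. -/
def IsNormalFilterOn (κ : Cardinal.{u}) {X : Type u} (F : Filter (Set X)) : Prop :=
  F.NeBot ∧ {a : Set X | #a < κ} ∈ F ∧ (∀ x : X, {a : Set X | x ∈ a} ∈ F) ∧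
  ∀ f : X → Set (Set X), (∀ x, f x ∈ F) → {a : Set X | ∀ x ∈ a, a ∈ f x} ∈ F

/-- `P` is `F`-layered (`F` a filter on `P_κ(X)`, `X` of cardinality `λ`). -/
def FLayered (κ : Cardinal.{u}) {X : Type u} (F : Filter (Set X))
    (P : Type u) [PartialOrder P] : Prop :=
  #P ≤ #X ∧ ∀ s : X → P, Function.Surjective s →
    {a : Set X | #a < κ ∧ RegSub κ (s '' a)} ∈ F


/-! ### Auxiliary machinery for `stmt_1` -/

section Aux

open Classical in
/-- Chooses, if possible, an element incompatible with everything in `A`. -/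
noncomputable def wFn {Q : Type u} [PartialOrder Q] (A : Set Q) : Set Q :=
  if h : ∃ p : Q, ∀ q ∈ A, ¬ Compat p q then {h.choose} else ∅

open Classical in
/-- Chooses, if possible, a common lower bound of `p` and `q`. -/
noncomputable def rFn {Q : Type u} [PartialOrder Q] (p q : Q) : Set Q :=
  if h : Compat p q then {h.choose} else ∅

open Classical in
/-- Chooses, if possible, a member of `C` containing `A`. -/
noncomputable def eFn {Q : Type u} (C : Set (Set Q)) (A : Set Q) : Set Q :=
  if h : ∃ c ∈ C, A ⊆ c then h.choose else ∅

/-- One closure step. -/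
noncomputable def FStep (κ : Cardinal.{u}) {Q : Type u} [PartialOrder Q] (C : Set (Set Q))
    (s : Set Q) : Set Q :=
  s ∪ (⋃ A ∈ {A : Set Q | A ⊆ s ∧ #A < κ}, (wFn A ∪ eFn C A)) ∪ ⋃ p ∈ s, ⋃ q ∈ s, rFn p q

/-- Transfinite iteration of a closure operator. -/
noncomputable def iterCl {Q : Type u} {I : Type u} [LT I] [wf : WellFoundedLT I]
    (F : Set Q → Set Q) (base : Set Q) : I → Set Q :=
  wf.wf.fix fun i rec => F (base ∪ ⋃ j : {j // j < i}, rec j.1 j.2)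

theorem iterCl_def {Q : Type u} {I : Type u} [LT I] [wf : WellFoundedLT I]
    (F : Set Q → Set Q) (base : Set Q) (i : I) :
    iterCl F base i = F (base ∪ ⋃ j : {j // j < i}, iterCl F base j.1) :=
  wf.wf.fix_eq _ i

theorem subset_FStep {Q : Type u} [PartialOrder Q] (κ : Cardinal.{u}) (C : Set (Set Q))
    (s : Set Q) : s ⊆ FStep κ C s :=
  fun _ hx => Or.inl (Or.inl hx)

theorem wFn_subset_FStep {Q : Type u} [PartialOrder Q] {κ : Cardinal.{u}} {C : Set (Set Q)}
    {s A : Set Q} (hA : A ⊆ s) (hAk : #A < κ) : wFn A ⊆ FStep κ C s := by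
  intro x hx
  exact Or.inl (Or.inr (Set.mem_biUnion (s := {A : Set Q | A ⊆ s ∧ #A < κ}) ⟨hA, hAk⟩
    (Or.inl hx)))

theorem eFn_subset_FStep {Q : Type u} [PartialOrder Q] {κ : Cardinal.{u}} {C : Set (Set Q)}
    {s A : Set Q} (hA : A ⊆ s) (hAk : #A < κ) : eFn C A ⊆ FStep κ C s := by
  intro x hx
  exact Or.inl (Or.inr (Set.mem_biUnion (s := {A : Set Q | A ⊆ s ∧ #A < κ}) ⟨hA, hAk⟩
    (Or.inr hx)))

theorem rFn_subset_FStep {Q : Type u} [PartialOrder Q] {κ : Cardinal.{u}} {C : Set (Set Q)}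
    {s : Set Q} {p q : Q} (hp : p ∈ s) (hq : q ∈ s) : rFn p q ⊆ FStep κ C s := by
  intro x hx
  exact Or.inr (Set.mem_biUnion hp (Set.mem_biUnion hq hx))

theorem mk_small_subsets_le {Q : Type u} {κ lam : Cardinal.{u}} (hunc : ℵ₀ < κ)
    (hkl : κ ≤ lam) (hpow : lam ^< κ = lam) (s : Set Q) (hs : #s ≤ lam) :
    #{A : Set Q | A ⊆ s ∧ #A < κ} ≤ lam := by
  have hlinf : ℵ₀ ≤ lam := hunc.le.trans hkl
  haveI : IsWellOrder κ.ord.ToType (· < ·) := isWellOrder_lt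
  set recov : (Σ i : κ.ord.ToType, ({j : κ.ord.ToType // j < i} → Option s)) → Set Q :=
    fun p => {q : Q | ∃ j, ((p.2 j).map Subtype.val = some q)} with hrecov
  have key : ∀ A : {A : Set Q // A ⊆ s ∧ #A < κ},
      ∃ p : Σ i : κ.ord.ToType, ({j : κ.ord.ToType // j < i} → Option s), A.1 = recov p := by
    rintro ⟨A, hA1, hA2⟩
    have hlt : (#A).ord < Ordinal.type ((· < ·) : κ.ord.ToType → κ.ord.ToType → Prop) := by
      rw [Ordinal.type_toType]
      exact Cardinal.ord_lt_ord.2 hA2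
    set i := Ordinal.enum ((· < ·) : κ.ord.ToType → κ.ord.ToType → Prop) ⟨(#A).ord, hlt⟩ with hi
    have hcard : #{j : κ.ord.ToType // j < i} = #A := by
      have h1 : #{j : κ.ord.ToType // j < i} =
          (Ordinal.typein ((· < ·) : κ.ord.ToType → κ.ord.ToType → Prop) i).card :=
        Ordinal.card_typein i
      rw [h1, hi, Ordinal.typein_enum, Cardinal.card_ord]
    obtain ⟨e⟩ := Cardinal.eq.1 hcard
    refine ⟨⟨i, fun j => some ⟨(e j).1, hA1 (e j).2⟩⟩, ?_⟩
    ext q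
    simp only [hrecov, Set.mem_setOf_eq, Option.map_some, Option.some.injEq]
    constructor
    · intro hq
      exact ⟨e.symm ⟨q, hq⟩, by rw [e.apply_symm_apply]⟩
    · rintro ⟨j, hj⟩
      exact hj ▸ (e j).2
  choose pf hpf using key
  have hinj : Function.Injective pf := by
    intro A B hAB
    apply Subtype.ext
    rw [hpf A, hpf B, hAB]
  calc #{A : Set Q | A ⊆ s ∧ #A < κ}
      ≤ #(Σ i : κ.ord.ToType, ({j : κ.ord.ToType // j < i} → Option s)) :=
        Cardinal.mk_le_of_injective hinj
    _ = Cardinal.sum (fun i : κ.ord.ToType => #({j : κ.ord.ToType // j < i} → Option s)) :=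
        mk_sigma _
    _ ≤ Cardinal.sum (fun _ : κ.ord.ToType => lam) := by
        refine Cardinal.sum_le_sum _ _ fun i => ?_
        have h2 : #(Option s) ≤ lam := by
          rw [mk_option]
          calc #s + 1 ≤ lam + lam :=
                add_le_add hs (le_trans (by exact_mod_cast one_le_aleph0.trans hlinf) le_rfl)
            _ = lam := add_eq_self hlinf
        have h3 : #{j : κ.ord.ToType // j < i} < κ := Cardinal.mk_Iio_ord_toType i
        calc #({j : κ.ord.ToType // j < i} → Option s)
            = #(Option s) ^ #{j : κ.ord.ToType // j < i} := (Cardinal.power_def _ _).symm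
          _ ≤ lam ^ #{j : κ.ord.ToType // j < i} := Cardinal.power_le_power_right h2
          _ ≤ lam ^< κ := Cardinal.le_powerlt lam h3
          _ = lam := hpow
    _ = #κ.ord.ToType * lam := Cardinal.sum_const' _ lam
    _ = κ * lam := by rw [Cardinal.mk_ord_toType]
    _ ≤ lam := by
        rw [Cardinal.mul_eq_max hunc.le hlinf]
        exact max_le hkl le_rfl

theorem card_wFn {Q : Type u} [PartialOrder Q] (A : Set Q) : #(wFn A) ≤ 1 := by
  rw [wFn]; split
  · simp
  · simp

theorem card_rFn {Q : Type u} [PartialOrder Q] (p q : Q) : #(rFn p q) ≤ 1 := by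
  rw [rFn]; split
  · simp
  · simp

theorem card_FStep {Q : Type u} [PartialOrder Q] {κ lam : Cardinal.{u}} (hunc : ℵ₀ < κ)
    (hkl : κ ≤ lam) (hpow : lam ^< κ = lam) (C : Set (Set Q))
    (hE : ∀ A : Set Q, #(eFn C A) ≤ κ) (s : Set Q) (hs : #s ≤ lam) :
    #(FStep κ C s) ≤ lam := by
  have hlinf : ℵ₀ ≤ lam := hunc.le.trans hkl
  have hB : #(⋃ A ∈ {A : Set Q | A ⊆ s ∧ #A < κ}, (wFn A ∪ eFn C A)) ≤ lam := by
    rw [Set.biUnion_eq_iUnion]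
    refine le_trans Cardinal.mk_iUnion_le_sum_mk ?_
    calc Cardinal.sum (fun A : {A : Set Q | A ⊆ s ∧ #A < κ} => #((wFn A.1 ∪ eFn C A.1) : Set Q))
        ≤ Cardinal.sum (fun _ : {A : Set Q | A ⊆ s ∧ #A < κ} => κ) := by
          refine Cardinal.sum_le_sum _ _ fun A => ?_
          refine le_trans (Cardinal.mk_union_le _ _) ?_
          calc #(wFn A.1) + #(eFn C A.1) ≤ κ + κ :=
                add_le_add ((card_wFn _).trans (le_trans one_le_aleph0 hunc.le)) (hE _)
            _ = κ := add_eq_self hunc.le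
      _ = #{A : Set Q | A ⊆ s ∧ #A < κ} * κ := Cardinal.sum_const' _ _
      _ ≤ lam * lam := mul_le_mul' (mk_small_subsets_le hunc hkl hpow s hs) hkl
      _ = lam := mul_eq_self hlinf
  have hR : #(⋃ p ∈ s, ⋃ q ∈ s, rFn p q) ≤ lam := by
    rw [Set.biUnion_eq_iUnion]
    refine le_trans Cardinal.mk_iUnion_le_sum_mk ?_
    calc Cardinal.sum (fun p : s => #(⋃ q ∈ s, rFn p.1 q))
        ≤ Cardinal.sum (fun _ : s => lam) := by
          refine Cardinal.sum_le_sum _ _ fun p => ?_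
          rw [Set.biUnion_eq_iUnion]
          refine le_trans Cardinal.mk_iUnion_le_sum_mk ?_
          calc Cardinal.sum (fun q : s => #(rFn p.1 q.1))
              ≤ Cardinal.sum (fun _ : s => 1) := Cardinal.sum_le_sum _ _ fun q => card_rFn _ _
            _ = #s * 1 := Cardinal.sum_const' _ _
            _ ≤ lam := by rw [mul_one]; exact hs
      _ = #s * lam := Cardinal.sum_const' _ _
      _ ≤ lam * lam := mul_le_mul' hs le_rfl
      _ = lam := mul_eq_self hlinf
  rw [FStep]
  refine le_trans (Cardinal.mk_union_le _ _) ?_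
  refine le_trans (add_le_add (le_trans (Cardinal.mk_union_le _ _)
    (add_le_add hs hB)) hR) ?_
  rw [add_eq_self hlinf, add_eq_self hlinf]

end Aux

/-- closure of κ-cc posets under regular suborders of size ≤ λ
capturing a given club. -/
theorem stmt_1 (κ lam : Cardinal.{u}) (hreg : κ.IsRegular) (hunc : ℵ₀ < κ)
    (hkl : κ ≤ lam) (hpow : lam ^< κ = lam)
    (Q : Type u) [PartialOrder Q] (hcc : CC κ Q)
    (Pset : Set Q) (hPcard : #Pset ≤ lam)
    (C : Set (Set Q)) (hC : PkClub κ C) :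
    ∃ P' : Set Q, RegularSuborder P' ∧ #P' ≤ lam ∧ Pset ⊆ P' ∧
      SubClub κ P' {a ∈ C | a ⊆ P'} := by
  classical
  have hlinf : ℵ₀ ≤ lam := hunc.le.trans hkl
  haveI : IsWellOrder κ.ord.ToType (· < ·) := isWellOrder_lt
  haveI hne : Nonempty κ.ord.ToType :=
    Cardinal.mk_ne_zero_iff.1 (by rw [Cardinal.mk_ord_toType]; exact (aleph0_pos.trans hunc).ne')
  -- basic facts about the choice functions
  have hE : ∀ A : Set Q, #(eFn C A) ≤ κ := by
    intro A
    rw [eFn]; split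
    · next h => exact ((hC.1 _ h.choose_spec.1).2).le
    · simp
  have hEmem : ∀ A : Set Q, #A < κ → eFn C A ∈ C ∧ A ⊆ eFn C A := by
    intro A hA
    rw [eFn]; split
    · next h => exact h.choose_spec
    · next h => exact absurd (hC.2.1 A (Set.subset_univ A) hA) h
  have hw_spec : ∀ A : Set Q, (∃ p : Q, ∀ q ∈ A, ¬ Compat p q) →
      ∃ x ∈ wFn A, ∀ q ∈ A, ¬ Compat x q := by
    intro A h
    rw [wFn, dif_pos h]
    exact ⟨h.choose, rfl, h.choose_spec⟩
  have hr_spec : ∀ p q : Q, Compat p q → ∃ x ∈ rFn p q, x ≤ p ∧ x ≤ q := by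
    intro p q h
    rw [rFn, dif_pos h]
    exact ⟨h.choose, rfl, h.choose_spec⟩
  -- the iteration
  obtain ⟨g, hgdef⟩ : ∃ g : κ.ord.ToType → Set Q,
      ∀ i, g i = FStep κ C (Pset ∪ ⋃ j : {j : κ.ord.ToType // j < i}, g j.1) :=
    ⟨iterCl (FStep κ C) Pset, fun i => iterCl_def _ _ i⟩
  set P' := ⋃ i, g i with hP'
  have hgsub : ∀ i, g i ⊆ P' := fun i => Set.subset_iUnion g i
  have hg2 : ∀ j i : κ.ord.ToType, j < i → g j ⊆ g i := by
    intro j i hji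
    rw [hgdef i]
    refine subset_trans ?_ (subset_FStep κ C _)
    intro x hx
    exact Or.inr (Set.mem_iUnion.2 ⟨⟨j, hji⟩, hx⟩)
  have hgP : ∀ i, Pset ⊆ g i := by
    intro i
    rw [hgdef i]
    exact subset_trans Set.subset_union_left (subset_FStep κ C _)
  -- boundedness
  have hbd : ∀ S : Set κ.ord.ToType, #S < κ → ∃ i, ∀ j ∈ S, j < i := by
    intro S hS
    refine not_isCofinal_iff.1 fun h => (Order.cof_le h).not_gt ?_
    rwa [Ordinal.cof_toType, hreg.cof_eq]
  have hnext : ∀ i : κ.ord.ToType, ∃ i', i < i' := by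
    intro i
    obtain ⟨i', h⟩ := hbd {i} ((Cardinal.mk_singleton i).trans_lt (one_lt_aleph0.trans hunc))
    exact ⟨i', h i rfl⟩
  have hcap : ∀ a : Set Q, a ⊆ P' → #a < κ → ∃ i, a ⊆ g i := by
    intro a ha hak
    have hx : ∀ x : a, ∃ i, (x : Q) ∈ g i := fun x => Set.mem_iUnion.1 (ha x.2)
    choose ix hix using hx
    obtain ⟨i, hi⟩ := hbd (Set.range ix) (lt_of_le_of_lt Cardinal.mk_range_le hak)
    exact ⟨i, fun x hxa => hg2 _ _ (hi _ (Set.mem_range_self ⟨x, hxa⟩)) (hix ⟨x, hxa⟩)⟩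
  -- absorption of witnesses
  have habs : ∀ (i i' : κ.ord.ToType) (A : Set Q), i < i' → A ⊆ g i → #A < κ →
      wFn A ⊆ g i' ∧ eFn C A ⊆ g i' := by
    intro i i' A hii' hAi hAk
    have hsub : A ⊆ Pset ∪ ⋃ j : {j : κ.ord.ToType // j < i'}, g j.1 := by
      intro x hx
      exact Or.inr (Set.mem_iUnion.2 ⟨⟨i, hii'⟩, hAi hx⟩)
    rw [hgdef i']
    exact ⟨wFn_subset_FStep hsub hAk, eFn_subset_FStep hsub hAk⟩
  have habsr : ∀ (i i' : κ.ord.ToType) (p q : Q), i < i' → p ∈ g i → q ∈ g i →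
      rFn p q ⊆ g i' := by
    intro i i' p q hii' hp hq
    have hsub : ∀ x ∈ g i, x ∈ Pset ∪ ⋃ j : {j : κ.ord.ToType // j < i'}, g j.1 := by
      intro x hx
      exact Or.inr (Set.mem_iUnion.2 ⟨⟨i, hii'⟩, hx⟩)
    rw [hgdef i']
    exact rFn_subset_FStep (hsub p hp) (hsub q hq)
  -- condition 1 of regularity
  have hc1 : ∀ p ∈ P', ∀ q ∈ P', Compat p q → CompatIn P' p q := by
    intro p hp q hq hpq
    have hsubpq : ({p, q} : Set Q) ⊆ P' := by
      intro x hx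
      rcases hx with rfl | rfl
      exacts [hp, hq]
    have hcpq : #({p, q} : Set Q) < κ :=
      lt_of_lt_of_le (Set.Finite.lt_aleph0 (Set.toFinite _)) hunc.le
    obtain ⟨i, hi⟩ := hcap {p, q} hsubpq hcpq
    obtain ⟨i', hii'⟩ := hnext i
    obtain ⟨x, hx, hxp, hxq⟩ := hr_spec p q hpq
    exact ⟨x, hgsub i' (habsr i i' p q hii' (hi (by simp)) (hi (by simp)) hx), hxp, hxq⟩
  -- cardinality of the stages
  have hcardg : ∀ i : κ.ord.ToType, #(g i) ≤ lam := by
    intro i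
    induction i using WellFoundedLT.induction with
    | _ i IH =>
      rw [hgdef i]
      refine card_FStep hunc hkl hpow C hE _ ?_
      refine le_trans (Cardinal.mk_union_le _ _) ?_
      have hU : #(⋃ j : {j : κ.ord.ToType // j < i}, g j.1) ≤ lam := by
        refine le_trans Cardinal.mk_iUnion_le_sum_mk ?_
        calc Cardinal.sum (fun j : {j : κ.ord.ToType // j < i} => #(g j.1))
            ≤ Cardinal.sum (fun _ : {j : κ.ord.ToType // j < i} => lam) :=
              Cardinal.sum_le_sum _ _ fun j => IH j.1 j.2
          _ = #{j : κ.ord.ToType // j < i} * lam := Cardinal.sum_const' _ _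
          _ ≤ lam * lam := mul_le_mul'
              (((Cardinal.mk_Iio_ord_toType i).le).trans hkl) le_rfl
          _ = lam := mul_eq_self hlinf
      calc #Pset + #(⋃ j : {j : κ.ord.ToType // j < i}, g j.1) ≤ lam + lam :=
            add_le_add hPcard hU
        _ = lam := add_eq_self hlinf
  have hcardP : #P' ≤ lam := by
    rw [hP']
    refine le_trans Cardinal.mk_iUnion_le_sum_mk ?_
    calc Cardinal.sum (fun i : κ.ord.ToType => #(g i))
        ≤ Cardinal.sum (fun _ : κ.ord.ToType => lam) := Cardinal.sum_le_sum _ _ hcardg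
      _ = #κ.ord.ToType * lam := Cardinal.sum_const' _ _
      _ = κ * lam := by rw [Cardinal.mk_ord_toType]
      _ ≤ lam * lam := mul_le_mul' hkl le_rfl
      _ = lam := mul_eq_self hlinf
  refine ⟨P', ⟨hc1, ?_⟩, hcardP, (hgP (Classical.arbitrary _)).trans
    (hgsub (Classical.arbitrary _)), ?_, ?_, ?_⟩
  -- condition 2 of regularity
  · intro A hAP hanti hmax p
    by_contra hcon
    push_neg at hcon
    have hQanti : IsPOAntichain A := by
      intro x hx y hy hxy hcomp
      exact hanti x hx y hy hxy (hc1 x (hAP hx) y (hAP hy) hcomp)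
    have hAk : #A < κ := hcc A hQanti
    obtain ⟨i, hi⟩ := hcap A hAP hAk
    obtain ⟨i', hii'⟩ := hnext i
    obtain ⟨x, hxw, hxinc⟩ := hw_spec A ⟨p, hcon⟩
    have hxP : x ∈ P' := hgsub i' ((habs i i' A hii' hi hAk).1 hxw)
    obtain ⟨q, hqA, r, _, hrx, hrq⟩ := hmax x hxP
    exact hxinc q hqA ⟨r, hrx, hrq⟩
  -- SubClub: members
  · intro c hc
    exact ⟨hc.2, (hC.1 c hc.1).2⟩
  -- SubClub: cofinality
  · intro a haP hak
    obtain ⟨i, hi⟩ := hcap a haP hak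
    obtain ⟨i', hii'⟩ := hnext i
    refine ⟨eFn C a, ⟨(hEmem a hak).1, ?_⟩, (hEmem a hak).2⟩
    exact subset_trans (habs i i' a hii' hi hak).2 (hgsub i')
  -- SubClub: chain closure
  · intro D hD1 hD2 hD3 hD4
    refine ⟨hC.2.2 D hD1 (fun d hd => (hD2 hd).1) hD3 hD4, ?_⟩
    exact Set.sUnion_subset fun d hd => (hD2 hd).2


end Layered
end

section
/- If κ is an uncountable regular cardinal and P is a κ-stationarily layered partial order, then P is κ-Knaster: every family of κ many conditions in P contains a subfamily of size κ of pairwise compatible conditions. -/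
universe u v

open Cardinal

namespace Layered

variable {P : Type u}

/-! ### Auxiliary lemmas -/

section AuxOrder
variable [PartialOrder P]

lemma compat_symm {p q : P} (h : Compat p q) : Compat q p := by
  obtain ⟨r, h1, h2⟩ := h; exact ⟨r, h2, h1⟩

lemma compatIn_symm {S : Set P} {p q : P} (h : CompatIn S p q) : CompatIn S q p := by
  obtain ⟨r, h0, h1, h2⟩ := h; exact ⟨r, h0, h2, h1⟩

/-- Every condition has a reduction to a regular suborder. -/
lemma exists_reduction {S : Set P} (hS : RegularSuborder S) (p : P) :
    ∃ q ∈ S, ∀ r ∈ S, r ≤ q → Compat r p := by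
  by_contra hcon
  push_neg at hcon
  -- every element of `S` has an extension in `S` incompatible with `p`
  have hdense : ∀ q ∈ S, ∃ r ∈ S, r ≤ q ∧ ¬ Compat r p := by
    intro q hq
    obtain ⟨r, hr1, hr2, hr3⟩ := hcon q hq
    exact ⟨r, hr1, hr2, hr3⟩
  set D : Set P := {r | r ∈ S ∧ ¬ Compat r p} with hDdef
  obtain ⟨A, hA⟩ := zorn_subset
      {B : Set P | B ⊆ D ∧ ∀ a ∈ B, ∀ b ∈ B, a ≠ b → ¬ CompatIn S a b} (by
    intro c hc hchain
    refine ⟨⋃₀ c, ⟨?_, ?_⟩, fun s hs => Set.subset_sUnion_of_mem hs⟩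
    · intro x hx
      obtain ⟨t, ht, hxt⟩ := hx
      exact (hc ht).1 hxt
    · rintro a ⟨t, ht, hat⟩ b ⟨t', ht', hbt'⟩ hab
      rcases hchain.total ht ht' with h | h
      · exact (hc ht').2 a (h hat) b hbt' hab
      · exact (hc ht).2 a hat b (h hbt') hab)
  obtain ⟨hAD, hAanti⟩ := hA.prop
  have hAS : A ⊆ S := fun a ha => (hAD ha).1
  -- A is predense in S
  have hpre : ∀ s ∈ S, ∃ a ∈ A, CompatIn S s a := by
    intro s hs
    obtain ⟨r, hrS, hrs, hrp⟩ := hdense s hs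
    have hrD : r ∈ D := ⟨hrS, hrp⟩
    by_cases hcase : ∃ a ∈ A, CompatIn S r a
    · obtain ⟨a, haA, t, htS, htr, hta⟩ := hcase
      exact ⟨a, haA, t, htS, le_trans htr hrs, hta⟩
    · push_neg at hcase
      by_cases hrA : r ∈ A
      · exact absurd ⟨r, hrS, le_refl r, le_refl r⟩ (hcase r hrA)
      · exfalso
        have hmem : A ∪ {r} ∈
            {B : Set P | B ⊆ D ∧ ∀ a ∈ B, ∀ b ∈ B, a ≠ b → ¬ CompatIn S a b} := by
          constructor
          · intro x hx
            rcases hx with hx | hx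
            · exact hAD hx
            · rcases hx; exact hrD
          · rintro a (ha | ha) b (hb | hb) hab
            · exact hAanti a ha b hb hab
            · rcases hb; exact fun hcompat => hcase a ha (compatIn_symm hcompat)
            · rcases ha; exact hcase b hb
            · rcases ha; rcases hb; exact absurd rfl hab
        have := hA.eq_of_subset hmem Set.subset_union_left
        exact hrA (this ▸ Set.mem_union_right A rfl : r ∈ A)
    -- done
  obtain ⟨a, haA, hcompat⟩ := hS.2 A hAS hAanti hpre p
  exact (hAD haA).2 (compat_symm hcompat)

/-- `q` is a reduction of `e x` to some regular suborder whose trace on the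
enumeration `e` is exactly the initial segment below `x`. -/
def GoodPt {X : Type u} [LT X] (e : X → P) (q : P) (x : X) : Prop :=
  ∃ M : Set P, RegularSuborder M ∧ (∀ y, e y ∈ M ↔ y < x) ∧ q ∈ M ∧
    ∀ r ∈ M, r ≤ q → Compat r (e x)

end AuxOrder

lemma iUnion_small {κ : Cardinal.{u}} (hreg : κ.IsRegular) {α ι : Type u} {s : ι → Set α}
    (hι : #ι < κ) (hs : ∀ i, #(s i) < κ) : #(⋃ i, s i) < κ :=
  (Cardinal.mk_iUnion_le s).trans_lt
    (Cardinal.mul_lt_of_lt hreg.1 hι (Cardinal.iSup_lt_of_isRegular hreg hι hs))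

/-- The club used in the main argument: sets of size `< κ` whose trace on the
enumeration `e` is an initial segment, closed under a fixed function `f`. -/
lemma club_aux {κ : Cardinal.{u}} (hreg : κ.IsRegular) (hunc : ℵ₀ < κ)
    {Q : Type u} {X : Type u} [LinearOrder X]
    (hIic : ∀ x : X, #(Set.Iic x) < κ)
    (e : X → Q) (he : Function.Injective e) (f : Q → Q) :
    PkClub κ {M : Set Q | #M < κ ∧ (∀ x y : X, x ≤ y → e y ∈ M → e x ∈ M) ∧
      ∀ q ∈ M, f q ∈ M} := by
  set L : Set Q → Set X := fun b => {x | ∃ y, e y ∈ b ∧ x ≤ y} with hLdef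
  have hLsmall : ∀ b : Set Q, #b < κ → #(L b) < κ := by
    intro b hb
    have hcov : L b = ⋃ y : {y : X // e y ∈ b}, Set.Iic y.val := by
      ext x
      simp only [hLdef, Set.mem_setOf_eq, Set.mem_iUnion, Set.mem_Iic]
      exact ⟨fun ⟨y, hy, hxy⟩ => ⟨⟨y, hy⟩, hxy⟩, fun ⟨⟨y, hy⟩, hxy⟩ => ⟨y, hy, hxy⟩⟩
    have hidx : #{y : X // e y ∈ b} < κ := by
      refine lt_of_le_of_lt (Cardinal.mk_le_of_injective
        (f := fun y : {y : X // e y ∈ b} => (⟨e y.val, y.2⟩ : b)) ?_) hb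
      intro y₁ y₂ h12
      exact Subtype.ext (he (congrArg Subtype.val h12))
    rw [hcov]
    exact iUnion_small hreg hidx fun y => hIic y.val
  set cl : Set Q → Set Q := fun b => (b ∪ f '' b) ∪ e '' L (b ∪ f '' b) with hcldef
  have hclsub : ∀ b, b ⊆ cl b := fun b =>
    Set.subset_union_left.trans Set.subset_union_left
  have hclcard : ∀ b : Set Q, #b < κ → #(cl b) < κ := by
    intro b hb
    have h1 : #(b ∪ f '' b : Set Q) < κ :=
      (Cardinal.mk_union_le _ _).trans_lt
        (Cardinal.add_lt_of_lt hreg.1 hb ((Cardinal.mk_image_le).trans_lt hb))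
    have h2 : #(e '' L (b ∪ f '' b)) < κ :=
      (Cardinal.mk_image_le).trans_lt (hLsmall _ h1)
    exact (Cardinal.mk_union_le _ _).trans_lt (Cardinal.add_lt_of_lt hreg.1 h1 h2)
  have hcllower : ∀ b, ∀ x y : X, x ≤ y → e y ∈ cl b → e x ∈ cl b := by
    intro b x y hxy hy
    rcases hy with hy | hy
    · exact Set.mem_union_right _ ⟨x, ⟨y, hy, hxy⟩, rfl⟩
    · obtain ⟨y', hy', hey⟩ := hy
      have : y' = y := he hey
      subst this
      obtain ⟨z, hz, hyz⟩ := hy'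
      exact Set.mem_union_right _ ⟨x, ⟨z, hz, le_trans hxy hyz⟩, rfl⟩
  have hclf : ∀ b, ∀ q ∈ b, f q ∈ cl b := by
    intro b q hq
    exact Set.mem_union_left _ (Set.mem_union_right _ ⟨q, hq, rfl⟩)
  refine ⟨fun c hc => ⟨Set.subset_univ c, hc.1⟩, ?_, ?_⟩
  · -- cofinality
    intro a _ ha
    set g : ℕ → Set Q := fun n => cl^[n + 1] a with hgdef
    have hgsucc : ∀ n, g (n + 1) = cl (g n) := by
      intro n
      simp only [hgdef, Function.iterate_succ_apply']
    have hg0 : g 0 = cl a := by simp [hgdef]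
    have hgcard : ∀ n, #(g n) < κ := by
      intro n
      induction n with
      | zero => rw [hg0]; exact hclcard a ha
      | succ n ih => rw [hgsucc]; exact hclcard _ ih
    have hgmono : ∀ n, g n ⊆ g (n + 1) := by
      intro n; rw [hgsucc]; exact hclsub _
    have hgcl : ∀ n, g n = cl (cl^[n] a) := by
      intro n
      simp only [hgdef, Function.iterate_succ_apply']
    have hglower : ∀ n, ∀ x y : X, x ≤ y → e y ∈ g n → e x ∈ g n := by
      intro n x y hxy hy
      rw [hgcl n] at hy ⊢
      exact hcllower _ x y hxy hy
    refine ⟨⋃ n : ULift.{u} ℕ, g n.down, ⟨?_, ?_, ?_⟩, ?_⟩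
    · exact iUnion_small hreg (by rw [Cardinal.mk_denumerable]; exact hunc)
        fun n => hgcard n.down
    · intro x y hxy hy
      obtain ⟨n, hyn⟩ := Set.mem_iUnion.mp hy
      exact Set.mem_iUnion.mpr ⟨n, hglower n.down x y hxy hyn⟩
    · intro q hq
      obtain ⟨n, hqn⟩ := Set.mem_iUnion.mp hq
      exact Set.mem_iUnion.mpr ⟨⟨n.down + 1⟩, by rw [hgsucc]; exact hclf _ q hqn⟩
    · exact (hclsub a).trans (by
        rw [← hg0]
        exact Set.subset_iUnion (fun n : ULift.{u} ℕ => g n.down) ⟨0⟩)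
  · -- chain closure
    intro D hne hDsub hchain hDcard
    have hcard : #(⋃₀ D) < κ := by
      rw [Set.sUnion_eq_iUnion]
      exact iUnion_small hreg hDcard fun d => (hDsub d.2).1
    refine ⟨hcard, ?_, ?_⟩
    · intro x y hxy hy
      obtain ⟨d, hd, hyd⟩ := hy
      exact ⟨d, hd, (hDsub hd).2.1 x y hxy hyd⟩
    · intro q hq
      obtain ⟨d, hd, hqd⟩ := hq
      exact ⟨d, hd, (hDsub hd).2.2 q hqd⟩

/-- κ-stationarily layered posets are κ-Knaster. -/
theorem stmt_2 (κ : Cardinal.{u}) (hreg : κ.IsRegular) (hunc : ℵ₀ < κ)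
    (P : Type u) [PartialOrder P] (h : StationarilyLayered κ P) :
    Knaster κ P := by
  intro A hA
  -- enumerate `A` along the canonical well-order of type `κ.ord`
  have hX : #(κ.ord.ToType) = κ := Cardinal.mk_ord_toType κ
  obtain ⟨φ⟩ : Nonempty (κ.ord.ToType ≃ A) := Cardinal.eq.mp (hX.trans hA.symm)
  set e : κ.ord.ToType → P := fun x => (φ x : P) with he_def
  have he : Function.Injective e := by
    intro a b hab
    exact φ.injective (Subtype.ext hab)
  have herange : Set.range e = A := by
    ext p
    constructor
    · rintro ⟨x, rfl⟩; exact (φ x).2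
    · intro hp
      exact ⟨φ.symm ⟨p, hp⟩, by simp [he_def]⟩
  have hIic : ∀ x : κ.ord.ToType, #(Set.Iic x) < κ := by
    intro x
    have h1 : #(Set.Iio x) < κ := Cardinal.mk_Iio_ord_toType x
    have h2 : (Set.Iic x) = Set.Iio x ∪ {x} := by
      ext y
      simp [le_iff_lt_or_eq]
    rw [h2]
    refine (Cardinal.mk_union_le _ _).trans_lt (Cardinal.add_lt_of_lt hreg.1 h1 ?_)
    simpa using (Cardinal.one_lt_aleph0.trans hunc)
  -- Key step: some `q` works for unboundedly many `x`
  have key : ∃ q : P, ∀ x₀ : κ.ord.ToType, ∃ x, x₀ < x ∧ GoodPt e q x := by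
    by_contra hcon
    push_neg at hcon
    choose g hg using hcon
    obtain ⟨M, hMreg, hMcard, hMlower, hMcl⟩ :=
      h _ (club_aux hreg hunc hIic e he (fun p => e (g p)))
    have hMreg' : RegularSuborder M := hMreg.1
    -- the least index not in `M`
    have hne : {y : κ.ord.ToType | e y ∉ M}.Nonempty := by
      by_contra hempty
      rw [Set.not_nonempty_iff_eq_empty] at hempty
      have hsub : A ⊆ M := by
        intro p hp
        rw [← herange] at hp
        obtain ⟨x, rfl⟩ := hp
        by_contra hxM
        exact absurd (Set.eq_empty_iff_forall_notMem.mp hempty x) (by simpa using hxM)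
      have : κ ≤ #M := hA ▸ Cardinal.mk_le_mk_of_subset hsub
      exact absurd hMcard (not_lt.mpr this)
    obtain ⟨x, hx, hxmin⟩ := (wellFounded_lt (α := κ.ord.ToType)).has_min _ hne
    have hchar : ∀ y, e y ∈ M ↔ y < x := by
      intro y
      constructor
      · intro hy
        by_contra hlt
        push_neg at hlt
        exact hx (hMlower x y hlt hy)
      · intro hy
        by_contra h'
        exact hxmin y h' hy
    obtain ⟨q, hqM, hqred⟩ := exists_reduction hMreg' (e x)
    have hgood : GoodPt e q x := ⟨M, hMreg', hchar, hqM, hqred⟩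
    have hgqx : g q < x := (hchar (g q)).mp (hMcl q hqM)
    exact hg q x hgqx hgood
  obtain ⟨q, hq⟩ := key
  set T : Set κ.ord.ToType := {x | GoodPt e q x} with hTdef
  -- pairwise compatibility
  have main : ∀ x₁ x₂ : κ.ord.ToType, GoodPt e q x₁ → GoodPt e q x₂ → x₁ < x₂ →
      Compat (e x₁) (e x₂) := by
    rintro x₁ x₂ ⟨M₁, hM₁reg, hchar₁, hqM₁, hred₁⟩ ⟨M₂, hM₂reg, hchar₂, hqM₂, hred₂⟩ hlt
    have h1 : Compat q (e x₁) := hred₁ q hqM₁ le_rfl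
    have hx₁M₂ : e x₁ ∈ M₂ := (hchar₂ x₁).mpr hlt
    obtain ⟨r, hrM₂, hrq, hrx₁⟩ := hM₂reg.1 q hqM₂ (e x₁) hx₁M₂ h1
    obtain ⟨s, hs₁, hs₂⟩ := hred₂ r hrM₂ hrq
    exact ⟨s, le_trans hs₁ hrx₁, hs₂⟩
  refine ⟨e '' T, ?_, ?_, ?_⟩
  · rw [← herange]
    exact Set.image_subset_range e T
  · -- cardinality of the image
    rw [Cardinal.mk_image_eq he]
    refine le_antisymm ((Cardinal.mk_set_le T).trans hX.le) ?_
    by_contra hlt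
    push_neg at hlt
    have hL : #(⋃ y : T, Set.Iic y.val) < κ := iUnion_small hreg hlt fun y => hIic y.val
    have hLne : (⋃ y : T, Set.Iic y.val) ≠ Set.univ := by
      intro heq
      rw [heq, Cardinal.mk_univ, hX] at hL
      exact lt_irrefl κ hL
    obtain ⟨x, hxL⟩ := Set.ne_univ_iff_exists_notMem _ |>.mp hLne
    obtain ⟨x', hxx', hx'⟩ := hq x
    exact hxL (Set.mem_iUnion.mpr ⟨⟨x', hx'⟩, le_of_lt hxx'⟩)
  · rintro p₁ ⟨x₁, hx₁, rfl⟩ p₂ ⟨x₂, hx₂, rfl⟩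
    rcases lt_trichotomy x₁ x₂ with hc | hc | hc
    · exact main x₁ x₂ hx₁ hx₂ hc
    · subst hc
      exact ⟨e x₁, le_refl _, le_refl _⟩
    · exact compat_symm (main x₂ x₁ hx₂ hx₁ hc)

end Layered
end

section
/- If κ is λ-supercompact, U is a normal fine ultrafilter on P_κ(λ), and P is a partial order of cardinality at most λ satisfying the κ-chain condition, then for every surjection s : λ → P the set {a ∈ P_κ(λ) : s[a] is a regular suborder of P} belongs to U. -/
universe u v

open Cardinal

namespace Layered

variable {P : Type u}

/-- Pressing-down lemma for a normal ultrafilter. -/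
theorem press_down {X : Type u} (U : Ultrafilter (Set X))
    (hnormal : ∀ f : X → Set (Set X), (∀ x, f x ∈ U) → {a : Set X | ∀ x ∈ a, a ∈ f x} ∈ U)
    {T : Set (Set X)} (hT : T ∈ U) (g : Set X → X) (hg : ∀ a ∈ T, g a ∈ a) :
    ∃ x : X, {a : Set X | g a = x} ∈ U := by
  by_contra h
  push_neg at h
  have hf : ∀ x : X, {a : Set X | g a ≠ x} ∈ U := by
    intro x
    have h1 := (Ultrafilter.compl_mem_iff_notMem (s := {a : Set X | g a = x}) (f := U)).2 (h x)
    have h2 : ({a : Set X | g a = x})ᶜ = {a : Set X | g a ≠ x} := by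
      ext a; simp [Set.mem_compl_iff]
    rwa [h2] at h1
  have hN := hnormal (fun x => {a : Set X | g a ≠ x}) hf
  obtain ⟨a, haT, haN⟩ := Filter.nonempty_of_mem (Filter.inter_mem hT hN)
  exact haN (g a) (hg a haT) rfl

/-- for λ-supercompact κ with normal fine ultrafilter U on P_κ(λ),
κ-cc posets of size at most λ are U-layered. -/
theorem stmt_7 (κ : Cardinal.{u}) (hreg : κ.IsRegular) (hunc : ℵ₀ < κ)
    (X : Type u) (hkl : κ ≤ #X) (U : Ultrafilter (Set X))
    (hconc : {a : Set X | #a < κ} ∈ U)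
    (hfine : ∀ x : X, {a : Set X | x ∈ a} ∈ U)
    (hnormal : ∀ f : X → Set (Set X), (∀ x, f x ∈ U) → {a : Set X | ∀ x ∈ a, a ∈ f x} ∈ U)
    (hcomplete : ∀ (I : Type u) (g : I → Set (Set X)), #I < κ → (∀ i, g i ∈ U) →
      (⋂ i, g i) ∈ U)
    (P : Type u) [PartialOrder P] (hcard : #P ≤ #X) (hcc : CC κ P)
    (s : X → P) (hs : Function.Surjective s) :
    {a : Set X | #a < κ ∧ RegularSuborder (s '' a)} ∈ U := by
  classical
  have hXne : Nonempty X := by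
    refine Cardinal.mk_ne_zero_iff.1 ?_
    intro h0
    rw [h0] at hkl
    exact absurd (lt_of_lt_of_le hunc hkl) (by simp)
  -- compatibility witness function
  have hwex : ∀ x y : X, ∃ z : X, Compat (s x) (s y) → s z ≤ s x ∧ s z ≤ s y := by
    intro x y
    by_cases h : Compat (s x) (s y)
    · obtain ⟨r, h1, h2⟩ := h
      obtain ⟨z, rfl⟩ := hs r
      exact ⟨z, fun _ => ⟨h1, h2⟩⟩
    · exact ⟨x, fun hc => absurd hc h⟩
  choose w hw using hwex
  -- closure under the witness function is U-large
  have hG1 : {a : Set X | ∀ x ∈ a, ∀ y ∈ a, w x y ∈ a} ∈ U := by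
    have h1 : ∀ x : X, {a : Set X | ∀ y ∈ a, a ∈ {b : Set X | w x y ∈ b}} ∈ U :=
      fun x => hnormal (fun y => {b : Set X | w x y ∈ b}) (fun y => hfine (w x y))
    have h2 := hnormal (fun x => {a : Set X | ∀ y ∈ a, a ∈ {b : Set X | w x y ∈ b}}) h1
    refine Filter.mem_of_superset h2 ?_
    intro a ha x hx y hy
    exact ha x hx y hy
  -- closed sets give the first regularity clause
  have hG1' : ∀ a : Set X, (∀ x ∈ a, ∀ y ∈ a, w x y ∈ a) →
      ∀ p ∈ s '' a, ∀ q ∈ s '' a, Compat p q → CompatIn (s '' a) p q := by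
    rintro a ha p ⟨x, hx, rfl⟩ q ⟨y, hy, rfl⟩ hc
    exact ⟨s (w x y), ⟨w x y, ha x hx y hy, rfl⟩, (hw x y hc).1, (hw x y hc).2⟩
  by_contra hgoal
  set T2 : Set (Set X) :=
    {a : Set X | (#a < κ ∧ ¬ RegularSuborder (s '' a)) ∧ ∀ x ∈ a, ∀ y ∈ a, w x y ∈ a} with hT2def
  have hT2 : T2 ∈ U := by
    have hc := (Ultrafilter.compl_mem_iff_notMem
      (s := {a : Set X | #a < κ ∧ RegularSuborder (s '' a)}) (f := U)).2 hgoal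
    filter_upwards [hconc, hc, hG1] with a h1 h2 h3
    exact ⟨⟨h1, fun hr => h2 ⟨h1, hr⟩⟩, h3⟩
  -- pick failing antichains and witnesses of non-maximality
  have hsel : ∀ a : Set X, ∃ (A : Set P) (p : P), a ∈ T2 →
      A ⊆ s '' a ∧ (∀ p ∈ A, ∀ q ∈ A, p ≠ q → ¬ CompatIn (s '' a) p q) ∧
        (∀ p ∈ s '' a, ∃ q ∈ A, CompatIn (s '' a) p q) ∧ ∀ q ∈ A, ¬ Compat p q := by
    intro a
    by_cases ha : a ∈ T2
    · have hreg1 := hG1' a ha.2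
      have hnr : ¬ RegularSuborder (s '' a) := ha.1.2
      have hneg : ¬ (∀ A ⊆ s '' a, (∀ p ∈ A, ∀ q ∈ A, p ≠ q → ¬ CompatIn (s '' a) p q) →
          (∀ p ∈ s '' a, ∃ q ∈ A, CompatIn (s '' a) p q) → ∀ p : P, ∃ q ∈ A, Compat p q) :=
        fun h2 => hnr ⟨hreg1, h2⟩
      push_neg at hneg
      obtain ⟨A, hA1, hA2, hA3, p, hp⟩ := hneg
      exact ⟨A, p, fun _ => ⟨hA1, hA2, hA3, hp⟩⟩
    · exact ⟨∅, s (Classical.arbitrary X), fun h => absurd h ha⟩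
  choose AA pp hAA using hsel
  set bigA : Set P := {q : P | {a : Set X | q ∈ AA a} ∈ U} with hbigAdef
  -- U-a.e., AA a ⊆ bigA
  have hT3 : {a : Set X | a ∈ T2 ∧ AA a ⊆ bigA} ∈ U := by
    by_contra hB
    have hB' : {a : Set X | a ∈ T2 ∧ ¬ AA a ⊆ bigA} ∈ U := by
      have hc := (Ultrafilter.compl_mem_iff_notMem
        (s := {a : Set X | a ∈ T2 ∧ AA a ⊆ bigA}) (f := U)).2 hB
      filter_upwards [hT2, hc] with a h1 h2
      exact ⟨h1, fun hsub => h2 ⟨h1, hsub⟩⟩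
    have hgex : ∀ a : Set X, ∃ x : X,
        (a ∈ T2 ∧ ¬ AA a ⊆ bigA) → x ∈ a ∧ s x ∈ AA a ∧ s x ∉ bigA := by
      intro a
      by_cases ha : a ∈ T2 ∧ ¬ AA a ⊆ bigA
      · obtain ⟨q, hq1, hq2⟩ := Set.not_subset.1 ha.2
        obtain ⟨x, hx, hxq⟩ := (hAA a ha.1).1 hq1
        exact ⟨x, fun _ => ⟨hx, by rw [hxq]; exact hq1, by rw [hxq]; exact hq2⟩⟩
      · exact ⟨Classical.arbitrary X, fun h => absurd h ha⟩
    choose g hg using hgex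
    obtain ⟨x0, hx0⟩ := press_down U hnormal hB' g (fun a ha => (hg a ha).1)
    have hmem : s x0 ∈ bigA := by
      show {a : Set X | s x0 ∈ AA a} ∈ U
      filter_upwards [hB', hx0] with a ha hax
      exact hax ▸ (hg a ha).2.1
    obtain ⟨a, ha, hax⟩ := Filter.nonempty_of_mem (Filter.inter_mem hB' hx0)
    exact (hg a ha).2.2 (hax ▸ hmem)
  -- bigA is an antichain of P, hence small
  have hanti : IsPOAntichain bigA := by
    intro q1 hq1 q2 hq2 hne hcompat
    obtain ⟨a, ha1, ha2, haT⟩ :=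
      Filter.nonempty_of_mem (Filter.inter_mem hq1 (Filter.inter_mem hq2 hT2))
    obtain ⟨hsub, hanti', hmax', -⟩ := hAA a haT
    exact hanti' q1 ha1 q2 ha2 hne (hG1' a haT.2 q1 (hsub ha1) q2 (hsub ha2) hcompat)
  have hbigAsmall : #bigA < κ := hcc bigA hanti
  -- U-a.e., bigA ⊆ AA a
  have hW : {a : Set X | ∀ q ∈ bigA, q ∈ AA a} ∈ U := by
    have hint := hcomplete (↥bigA) (fun q => {a : Set X | (q : P) ∈ AA a}) hbigAsmall
      (fun q => q.2)
    refine Filter.mem_of_superset hint ?_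
    intro a ha q hq
    exact Set.mem_iInter.1 ha ⟨q, hq⟩
  -- derive the contradiction
  obtain ⟨a0, ha0T3, ha0W⟩ := Filter.nonempty_of_mem (Filter.inter_mem hT3 hW)
  obtain ⟨z, hz⟩ := hs (pp a0)
  obtain ⟨a1, ⟨⟨ha1T2, ha1sub⟩, ha1W⟩, ha1z⟩ :=
    Filter.nonempty_of_mem (Filter.inter_mem (Filter.inter_mem hT3 hW) (hfine z))
  obtain ⟨hsub1, hanti1, hmax1, hp1⟩ := hAA a1 ha1T2
  have hpz : pp a0 ∈ s '' a1 := ⟨z, ha1z, hz⟩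
  obtain ⟨q, hqA, r, hrS, hr1, hr2⟩ := hmax1 (pp a0) hpz
  exact (hAA a0 ha0T3.1).2.2.2 q (ha0W q (ha1sub hqA)) ⟨r, hr1, hr2⟩

end Layered
end

section
/- Let κ be an inaccessible cardinal. Then every <κ-linked partial order is κ-stationarily layered. Conversely, if κ is an uncountable regular cardinal that is not strongly inaccessible, then there is a <κ-linked partial order of cardinality at most κ that is not κ-stationarily layered. -/
universe u v

open Cardinal

namespace Layered

variable {P : Type u}

-- Auxiliary results
section Aux

lemma part1 (κ : Cardinal.{u}) (hκ : κ.IsInaccessible) (P : Type u) [PartialOrder P]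
    (hlink : LtLinked κ P) : StationarilyLayered κ P := by
  intro C hC
  by_cases hP : Nonempty P
  case neg =>
    -- P is empty
    obtain ⟨c, hcC, -⟩ := hC.2.1 (∅ : Set P) (Set.empty_subset _)
      (by rw [mk_emptyCollection]; exact (aleph0_pos).trans hκ.1)
    refine ⟨c, ⟨⟨?_, ?_⟩, (hC.1 c hcC).2⟩, hcC⟩
    · intro p hp
      exact absurd ⟨p⟩ hP
    · intro A _ _ _ p
      exact absurd ⟨p⟩ hP
  case pos =>
  haveI : Inhabited P := Classical.inhabited_of_nonempty hP
  classical
  obtain ⟨Γ, col, hΓ, hcol⟩ := hlink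
  set μ : Cardinal.{u} := max #Γ ℵ₀ with hμdef
  set θ : Cardinal.{u} := Order.succ μ with hθdef
  have hμκ : μ < κ := max_lt hΓ hκ.1
  have hθreg : θ.IsRegular := isRegular_succ (le_max_right _ _)
  have hθκ : θ < κ := lt_of_le_of_lt (Order.succ_le_of_lt (cantor μ)) (hκ.isStrongLimit.isStrongPrelimit hμκ)
  have hμθ : μ < θ := Order.lt_succ_of_le le_rfl
  have hθω : ℵ₀ ≤ θ := le_of_lt (lt_of_le_of_lt (le_max_right _ _) hμθ)
  set I : Type u := θ.ord.ToType with hIdef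
  have hImk : #I = θ := by rw [hIdef, Cardinal.mk_toType, Cardinal.card_ord]
  haveI : Nonempty I := by
    rw [hIdef, Ordinal.toType_nonempty_iff_ne_zero]
    intro h0
    rw [← Cardinal.card_ord θ, h0, Ordinal.card_zero] at hθω
    exact absurd hθω (by simpa using aleph0_pos.not_ge)
  have bdd : ∀ T : Set I, #T < θ → ∃ i : I, ∀ t ∈ T, t < i := by
    intro T hT
    by_contra h
    push_neg at h
    have hu : IsCofinal T := by
      intro a
      obtain ⟨t, ht, ht2⟩ := h a
      exact ⟨t, ht, ht2⟩
    have := Order.cof_le hu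
    rw [Ordinal.cof_toType, hθreg.cof_ord] at this
    exact absurd (this.trans_lt hT) (lt_irrefl _)
  -- witness functions
  let W : P → P → P := fun p q => if h : Compat p q then h.choose else p
  have hW : ∀ p q : P, Compat p q → W p q ≤ p ∧ W p q ≤ q := by
    intro p q h
    simp only [W, dif_pos h]
    exact h.choose_spec
  let B : Set P → P := fun A => if h : ∃ x : P, ∀ a ∈ A, ¬ Compat x a then h.choose else default
  have hB : ∀ A : Set P, (∃ x : P, ∀ a ∈ A, ¬ Compat x a) → ∀ a ∈ A, ¬ Compat (B A) a := by
    intro A h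
    simp only [B, dif_pos h]
    exact h.choose_spec
  let g : Set P → Set P := fun X => (X ∪ Set.image2 W X X) ∪ B '' {A : Set P | A ⊆ X}
  have hgsub : ∀ X : Set P, X ⊆ g X := fun X => subset_trans Set.subset_union_left
    Set.subset_union_left
  have hgcard : ∀ X : Set P, #X < κ → #(g X) < κ := by
    intro X hX
    have h1 : #(Set.image2 W X X) < κ :=
      lt_of_le_of_lt mk_image2_le (mul_lt_of_lt hκ.1.le hX hX)
    have h2 : #(B '' {A : Set P | A ⊆ X}) < κ := by
      refine lt_of_le_of_lt mk_image_le ?_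
      have : {A : Set P | A ⊆ X} = Set.powerset X := rfl
      rw [this, mk_powerset]
      exact hκ.isStrongLimit.isStrongPrelimit hX
    calc #(g X) ≤ #(X ∪ Set.image2 W X X : Set P) + #(B '' {A : Set P | A ⊆ X}) := mk_union_le _ _
      _ ≤ (#X + #(Set.image2 W X X)) + #(B '' {A : Set P | A ⊆ X}) :=
          add_le_add_left (mk_union_le _ _) _
      _ < κ := add_lt_of_lt hκ.1.le (add_lt_of_lt hκ.1.le hX h1) h2
  -- the recursion
  let step : ∀ i : I, (∀ j : I, j < i → Set P) → Set P := fun i rec =>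
    if h : ∃ c ∈ C, g (⋃ j : {j : I // j < i}, rec j.1 j.2) ⊆ c then h.choose else ∅
  let F : I → Set P := (isWellOrder_lt (α := I)).toIsWellFounded.wf.fix step
  have hFeq : ∀ i : I, F i = step i (fun j _ => F j) :=
    fun i => WellFounded.fix_eq _ _ i
  let Xs : I → Set P := fun i => ⋃ j : {j : I // j < i}, F j.1
  have Inv : ∀ i : I, F i ∈ C ∧ g (Xs i) ⊆ F i := by
    intro i
    induction i using ((isWellOrder_lt (α := I)).toIsWellFounded.wf.induction) with
    | _ i IH =>
      have hXcard : #(Xs i) < κ := by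
        refine (card_iUnion_lt_iff_forall_of_isRegular hκ.isRegular ?_).2 ?_
        · exact lt_of_le_of_lt (mk_subtype_le _) (hImk ▸ hθκ)
        · intro j
          exact (hC.1 _ (IH j.1 j.2).1).2
      have hex : ∃ c ∈ C, g (Xs i) ⊆ c := by
        obtain ⟨c, hc1, hc2⟩ := hC.2.1 (g (Xs i)) (Set.subset_univ _) (hgcard _ hXcard)
        exact ⟨c, hc1, hc2⟩
      have : F i = hex.choose := by
        rw [hFeq i]
        simp only [step]
        rw [dif_pos hex]
      rw [this]
      exact ⟨hex.choose_spec.1, hex.choose_spec.2⟩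
  have hmono : ∀ j i : I, j < i → F j ⊆ F i := by
    intro j i hji
    refine subset_trans ?_ (subset_trans (hgsub _) (Inv i).2)
    exact Set.subset_iUnion (fun j : {j : I // j < i} => F j.1) ⟨j, hji⟩
  have hmonole : ∀ j i : I, j ≤ i → F j ⊆ F i := by
    intro j i hji
    rcases lt_or_eq_of_le hji with h | h
    · exact hmono j i h
    · rw [h]
  set S : Set P := ⋃ i : I, F i with hSdef
  have hsubXs : ∀ (i i' : I), i < i' → F i ⊆ Xs i' := by
    intro i i' h
    exact Set.subset_iUnion (fun j : {j : I // j < i'} => F j.1) ⟨i, h⟩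
  have hSC : S ∈ C := by
    have := hC.2.2 (Set.range F) ⟨F (Classical.arbitrary I), Set.mem_range_self _⟩
      (by rintro c ⟨i, rfl⟩; exact (Inv i).1)
      (by
        rintro c ⟨i, rfl⟩ c' ⟨i', rfl⟩ _
        rcases le_total i i' with h | h
        · exact Or.inl (hmonole _ _ h)
        · exact Or.inr (hmonole _ _ h))
      (lt_of_le_of_lt mk_range_le (hImk ▸ hθκ))
    rwa [Set.sUnion_range] at this
  have hstage : ∀ A : Set P, A ⊆ S → #A < θ → ∃ i : I, A ⊆ F i := by
    intro A hAS hA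
    have hch : ∀ a : A, ∃ i : I, (a : P) ∈ F i := by
      intro a
      have := hAS a.2
      rwa [hSdef, Set.mem_iUnion] at this
    choose idx hidx using hch
    obtain ⟨i, hi⟩ := bdd (Set.range idx) (lt_of_le_of_lt mk_range_le hA)
    refine ⟨i, fun a ha => ?_⟩
    exact hmono _ _ (hi (idx ⟨a, ha⟩) ⟨⟨a, ha⟩, rfl⟩) (hidx ⟨a, ha⟩)
  have hnext : ∀ i : I, ∃ i' : I, i < i' := by
    intro i
    obtain ⟨i', hi'⟩ := bdd {i} (by
      have : #({i} : Set I) = 1 := mk_singleton i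
      rw [this]
      exact one_lt_aleph0.trans_le hθω)
    exact ⟨i', hi' i rfl⟩
  -- condition 1
  have hcond1 : ∀ p ∈ S, ∀ q ∈ S, Compat p q → CompatIn S p q := by
    intro p hp q hq hpq
    obtain ⟨i, hi⟩ := hstage {p, q} (by
      intro x hx
      rcases hx with rfl | rfl
      · exact hp
      · exact hq) (lt_of_lt_of_le (((Set.finite_singleton q).insert p).lt_aleph0) hθω)
    obtain ⟨i', hii'⟩ := hnext i
    have hmem : W p q ∈ F i' := by
      refine (Inv i').2 ?_
      refine Set.mem_union_left _ (Set.mem_union_right _ ?_)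
      exact Set.mem_image2_of_mem (hsubXs i i' hii' (hi (by simp)))
        (hsubXs i i' hii' (hi (by simp)))
    exact ⟨W p q, Set.mem_iUnion.2 ⟨i', hmem⟩, (hW p q hpq).1, (hW p q hpq).2⟩
  -- condition 2
  have hcond2 : ∀ A ⊆ S, (∀ p ∈ A, ∀ q ∈ A, p ≠ q → ¬ CompatIn S p q) →
      (∀ p ∈ S, ∃ q ∈ A, CompatIn S p q) → ∀ p : P, ∃ q ∈ A, Compat p q := by
    intro A hAS hanti hmax
    by_contra hbad
    push_neg at hbad
    obtain ⟨x, hx⟩ := hbad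
    have hexB : ∃ x : P, ∀ a ∈ A, ¬ Compat x a := by
      refine ⟨x, fun a ha hc => ?_⟩
      obtain ⟨r, hr1, hr2⟩ := hc
      exact (hx a ha) ⟨r, hr1, hr2⟩
    -- A is a true antichain, hence small
    have htrue : ∀ p ∈ A, ∀ q ∈ A, p ≠ q → ¬ Compat p q := by
      intro p hp q hq hpq hc
      exact hanti p hp q hq hpq (hcond1 p (hAS hp) q (hAS hq) hc)
    have hAcard : #A < θ := by
      have hinj : Function.Injective (fun a : A => col a.1) := by
        intro a b hab
        by_contra hne
        have : (a : P) ≠ (b : P) := fun h => hne (Subtype.ext h)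
        exact htrue a a.2 b b.2 this (hcol _ _ hab)
      calc #A ≤ #Γ := mk_le_of_injective hinj
        _ ≤ μ := le_max_left _ _
        _ < θ := hμθ
    obtain ⟨i, hi⟩ := hstage A hAS hAcard
    obtain ⟨i', hii'⟩ := hnext i
    have hmem : B A ∈ F i' := by
      refine (Inv i').2 ?_
      refine Set.mem_union_right _ ?_
      exact Set.mem_image_of_mem B (subset_trans hi (hsubXs i i' hii'))
    obtain ⟨q, hqA, r, hrS, hr1, hr2⟩ := hmax (B A) (Set.mem_iUnion.2 ⟨i', hmem⟩)
    exact hB A hexB q hqA ⟨r, hr1, hr2⟩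
  exact ⟨S, ⟨⟨hcond1, hcond2⟩, (hC.1 S hSC).2⟩, hSC⟩



/-- Carrier of the counterexample poset: pairs of finite sets. -/
structure CP (K M : Type u) : Type u where
  a : Finset K
  b : Finset M

/-- Equivalence with the product, for cardinality computations. -/
def cpEquiv (K M : Type u) : CP K M ≃ Finset K × Finset M where
  toFun p := (p.a, p.b)
  invFun x := ⟨x.1, x.2⟩
  left_inv p := rfl
  right_inv x := rfl

/-- The coding partial order used in the counterexample. -/
def cOrd {K M : Type u} (Agr : K → M → Prop) : PartialOrder (CP K M) where
  le p q := q.a ⊆ p.a ∧ q.b ⊆ p.b ∧ ∀ γ ∈ q.a, ∀ m ∈ p.b, m ∉ q.b → ¬ Agr γ m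
  le_refl p := ⟨subset_rfl, subset_rfl, fun _ _ m hm hm2 => absurd hm hm2⟩
  le_trans p q r hpq hqr := by
    refine ⟨hqr.1.trans hpq.1, hqr.2.1.trans hpq.2.1, ?_⟩
    intro γ hγ m hm hm2
    by_cases hmq : m ∈ q.b
    · exact hqr.2.2 γ hγ m hmq hm2
    · exact hpq.2.2 γ (hqr.1 hγ) m hm hmq
  le_antisymm p q hpq hqp := by
    cases p; cases q
    have h1 := subset_antisymm hqp.1 hpq.1
    have h2 := subset_antisymm hqp.2.1 hpq.2.1
    simp_all

lemma part2core {K M : Type u} (κ : Cardinal.{u}) (hreg : κ.IsRegular) (hω : ℵ₀ < κ)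
    (Agr : K → M → Prop) (hK : #K = κ) (hM : #(Finset M) < κ)
    (hsep : ∀ (s : Finset K) (γs : K), γs ∉ s → ∃ m : M, Agr γs m ∧ ∀ γ ∈ s, ¬ Agr γ m) :
    @LtLinked κ _ (cOrd Agr) ∧ #(CP K M) ≤ κ ∧
      ¬ @StationarilyLayered κ _ (cOrd Agr) := by
  classical
  letI : PartialOrder (CP K M) := cOrd Agr
  have hle : ∀ p q : CP K M,
      p ≤ q ↔ (q.a ⊆ p.a ∧ q.b ⊆ p.b ∧ ∀ γ ∈ q.a, ∀ m ∈ p.b, m ∉ q.b → ¬ Agr γ m) :=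
    fun p q => Iff.rfl
  refine ⟨?_, ?_, ?_⟩
  · -- linked
    refine ⟨Finset M, fun p => p.b, hM, ?_⟩
    intro p q hpq
    refine ⟨⟨p.a ∪ q.a, p.b⟩, ?_, ?_⟩
    · exact ⟨Finset.subset_union_left, subset_rfl, fun _ _ m hm hm2 => absurd hm hm2⟩
    · have hpq' : p.b = q.b := hpq
      refine ⟨Finset.subset_union_right, le_of_eq hpq'.symm, ?_⟩
      intro γ hγ m hm hm2
      rw [← hpq'] at hm2
      exact absurd hm hm2
  · -- cardinality
    have h1 : #(Finset K) = κ := by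
      haveI : Infinite K := by
        rw [Cardinal.infinite_iff, hK]; exact hω.le
      rw [mk_finset_of_infinite, hK]
    calc #(CP K M) = #(Finset K × Finset M) := mk_congr (cpEquiv K M)
      _ = #(Finset K) * #(Finset M) := by rw [mk_prod, lift_id, lift_id]
      _ ≤ κ * κ := mul_le_mul' (le_of_eq h1) hM.le
      _ = κ := mul_eq_self hω.le
  · -- not stationarily layered
    intro hst
    set C : Set (Set (CP K M)) := {S | ∃ A : Set K, #A < κ ∧ S = {p : CP K M | ↑p.a ⊆ A}}
      with hCdef
    have hfinlt : ∀ s : Finset K, #(↑s : Set K) < κ := fun s =>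
      lt_of_lt_of_le (s.finite_toSet.lt_aleph0) hω.le
    have hclub : PkClub κ C := by
      refine ⟨?_, ?_, ?_⟩
      · -- small
        rintro c ⟨A, hA, rfl⟩
        refine ⟨Set.subset_univ _, ?_⟩
        have hsurj : {p : CP K M | ↑p.a ⊆ A} ⊆
            Set.range (fun x : Finset A × Finset M => (⟨x.1.image Subtype.val, x.2⟩ : CP K M)) := by
          rintro ⟨s, t⟩ hp
          refine ⟨(s.attach.image (fun z => (⟨z.1, hp z.2⟩ : A)), t), ?_⟩
          have : Finset.image Subtype.val
              (s.attach.image (fun z => (⟨z.1, hp z.2⟩ : A))) = s := by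
            ext γ
            simp only [Finset.mem_image, Finset.mem_attach, true_and, Subtype.exists]
            constructor
            · rintro ⟨a, ha, ⟨z, hz, hza⟩, rfl⟩
              obtain rfl : z = a := congrArg Subtype.val hza
              exact hz
            · intro hγ
              exact ⟨γ, hp hγ, ⟨γ, hγ, rfl⟩, rfl⟩
          simp [this]
        refine lt_of_le_of_lt (le_trans (mk_le_mk_of_subset hsurj) mk_range_le) ?_
        rw [mk_prod, lift_id, lift_id]
        have hFA : #(Finset A) < κ := by
          by_cases hfin : A.Finite
          · haveI := hfin.to_subtype
            haveI := Fintype.ofFinite A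
            exact lt_of_lt_of_le (lt_aleph0_of_finite _) hω.le
          · haveI : Infinite A := Set.infinite_coe_iff.2 hfin
            rw [mk_finset_of_infinite]
            exact hA
        exact mul_lt_of_lt hω.le hFA hM
      · -- cofinal
        intro a _ ha
        refine ⟨{p : CP K M | ↑p.a ⊆ ⋃ q ∈ a, (↑(CP.a q) : Set K)}, ⟨_, ?_, rfl⟩, ?_⟩
        · exact (card_biUnion_lt_iff_forall_of_isRegular hreg ha).2 fun q _ => hfinlt _
        · intro p hp
          exact Set.subset_biUnion_of_mem (u := fun q : CP K M => (↑(CP.a q) : Set K)) hp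
      · -- chain closed
        intro D hDne hDC hchain hDcard
        have hchoose : ∀ c : D, ∃ A : Set K, #A < κ ∧ (c : Set (CP K M)) = {p | ↑p.a ⊆ A} :=
          fun c => hDC c.2
        choose Af hAf1 hAf2 using hchoose
        haveI : Nonempty D := hDne.to_subtype
        refine ⟨⋃ c : D, Af c, ?_, ?_⟩
        · exact (card_iUnion_lt_iff_forall_of_isRegular hreg hDcard).2 hAf1
        · ext p
          constructor
          · rintro ⟨c, hcD, hpc⟩
            rw [show c = {p : CP K M | ↑p.a ⊆ Af ⟨c, hcD⟩} from hAf2 ⟨c, hcD⟩] at hpc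
            exact Set.mem_setOf.2 (subset_trans hpc (Set.subset_iUnion (fun c : D => Af c) ⟨c, hcD⟩))
          · intro hp
            have hp' : (↑p.a : Set K) ⊆ ⋃ c ∈ (Set.univ : Set D), Af c := by
              intro γ hγ
              have := (Set.mem_setOf.1 hp) hγ
              simpa using this
            have key : ∀ (d d' : D), (d : Set (CP K M)) ⊆ (d' : Set (CP K M)) → Af d ⊆ Af d' := by
              intro d d' hdd γ hγ
              have hmem : (⟨{γ}, (∅ : Finset M)⟩ : CP K M) ∈ (d : Set (CP K M)) := by
                rw [hAf2 d]; simpa using hγ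
              have := hdd hmem
              rw [hAf2 d'] at this
              simpa using this
            have hdir : DirectedOn (fun c c' : D => Af c ⊆ Af c') (Set.univ : Set D) := by
              rintro c - c' -
              rcases eq_or_ne (c : Set (CP K M)) (c' : Set (CP K M)) with h | h
              · exact ⟨c', Set.mem_univ _, key c c' (le_of_eq h), subset_rfl⟩
              · rcases hchain c.2 c'.2 (fun hcc => h (by rw [hcc])) with h' | h'
                · exact ⟨c', Set.mem_univ _, key c c' h', subset_rfl⟩
                · exact ⟨c, Set.mem_univ _, subset_rfl, key c' c h'⟩
            obtain ⟨c, -, hc⟩ := DirectedOn.exists_mem_subset_of_finset_subset_biUnion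
              (Set.univ_nonempty) hdir hp'
            have : p ∈ (c : Set (CP K M)) := by
              rw [hAf2 c]
              exact hc
            exact ⟨c, c.2, this⟩
    obtain ⟨S, hSreg, hSC⟩ := hst C hclub
    obtain ⟨A, hAcard, rfl⟩ := hSC
    obtain ⟨h1, h2⟩ := hSreg.1
    have hγs : ∃ γs : K, γs ∉ A := by
      by_contra h
      push_neg at h
      have : A = Set.univ := Set.eq_univ_of_forall h
      rw [this, Cardinal.mk_univ, hK] at hAcard
      exact absurd hAcard (lt_irrefl _)
    obtain ⟨γs, hγs⟩ := hγs
    set SA : Set (CP K M) := {p : CP K M | ↑p.a ⊆ A} with hSAdef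
    set D2 : Set (CP K M) := {p : CP K M | ↑p.a ⊆ A ∧ ∃ m ∈ p.b, Agr γs m} with hD2def
    have hD2SA : D2 ⊆ SA := fun p hp => hp.1
    have hdense : ∀ q ∈ SA, ∃ r ∈ D2, r ≤ q := by
      intro q hq
      have hqγ : γs ∉ q.a := fun h => hγs (hq h)
      obtain ⟨m, hm1, hm2⟩ := hsep q.a γs hqγ
      refine ⟨⟨q.a, insert m q.b⟩, ⟨hq, m, Finset.mem_insert_self _ _, hm1⟩, ?_⟩
      refine ⟨subset_rfl, Finset.subset_insert _ _, ?_⟩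
      intro γ hγ m' hm' hm'2
      have : m' = m := by
        rcases Finset.mem_insert.1 hm' with h | h
        · exact h
        · exact absurd h hm'2
      rw [this]
      exact hm2 γ hγ
    set Z : Set (Set (CP K M)) := {B | B ⊆ D2 ∧ ∀ p ∈ B, ∀ q ∈ B, p ≠ q → ¬ Compat p q}
      with hZdef
    obtain ⟨Astar, hAstarmax⟩ := zorn_subset Z (by
      intro ch hchZ hchain'
      refine ⟨⋃₀ ch, ⟨?_, ?_⟩, fun s hs => Set.subset_sUnion_of_mem hs⟩
      · intro p hp
        obtain ⟨s, hs, hps⟩ := hp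
        exact (hchZ hs).1 hps
      · intro p hp q hq hpq
        obtain ⟨s, hs, hps⟩ := hp
        obtain ⟨t, ht, hqt⟩ := hq
        rcases eq_or_ne s t with rfl | hst
        · exact (hchZ hs).2 p hps q hqt hpq
        · rcases hchain' hs ht hst with h | h
          · exact (hchZ ht).2 p (h hps) q hqt hpq
          · exact (hchZ hs).2 p hps q (h hqt) hpq)
    have hAstarZ : Astar ∈ Z := hAstarmax.1
    have hconc := h2 Astar (subset_trans hAstarZ.1 hD2SA)
      (by
        intro p hp q hq hpq hcomp
        obtain ⟨r, _, hr1, hr2⟩ := hcomp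
        exact hAstarZ.2 p hp q hq hpq ⟨r, hr1, hr2⟩)
      (by
        intro q hq
        obtain ⟨r, hrD2, hrq⟩ := hdense q hq
        have hrm : ∃ m ∈ Astar, Compat r m := by
          by_cases hrA : r ∈ Astar
          · exact ⟨r, hrA, r, le_rfl, le_rfl⟩
          · by_contra hno
            push_neg at hno
            have hmem : Astar ∪ {r} ∈ Z := by
              refine ⟨Set.union_subset hAstarZ.1 (by simpa using hrD2), ?_⟩
              intro p hp q' hq' hpq'
              rcases hp with hp | hp
              · rcases hq' with hq' | hq'
                · exact hAstarZ.2 p hp q' hq' hpq'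
                · rw [Set.mem_singleton_iff] at hq'
                  subst hq'
                  intro hc
                  obtain ⟨w, hw1, hw2⟩ := hc
                  exact hno p hp ⟨w, hw2, hw1⟩
              · rw [Set.mem_singleton_iff] at hp
                subst hp
                rcases hq' with hq' | hq'
                · exact hno q' hq'
                · rw [Set.mem_singleton_iff] at hq'
                  exact absurd hq'.symm hpq'
            have hsub := hAstarmax.2 hmem Set.subset_union_left
            exact hrA (hsub (Set.mem_union_right _ rfl))
        obtain ⟨m, hmA, w, hwr, hwm⟩ := hrm
        refine ⟨m, hmA, ⟨r.a ∪ m.a, r.b ∪ m.b⟩, ?_, ?_, ?_⟩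
        · have hr1 : (↑r.a : Set K) ⊆ A := hrD2.1
          have hm1 : (↑m.a : Set K) ⊆ A := (hD2SA (hAstarZ.1 hmA))
          refine Set.mem_setOf.2 ?_
          rw [Finset.coe_union]
          exact Set.union_subset hr1 hm1
        · refine le_trans (b := r) ?_ hrq
          refine ⟨Finset.subset_union_left, Finset.subset_union_left, ?_⟩
          intro γ hγ m' hm' hm'2
          have hm'm : m' ∈ m.b := by
            rcases Finset.mem_union.1 hm' with h | h
            · exact absurd h hm'2
            · exact h
          exact hwr.2.2 γ hγ m' (hwm.2.1 hm'm) hm'2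
        · refine ⟨Finset.subset_union_right, Finset.subset_union_right, ?_⟩
          intro γ hγ m' hm' hm'2
          have hm'r : m' ∈ r.b := by
            rcases Finset.mem_union.1 hm' with h | h
            · exact h
            · exact absurd h hm'2
          exact hwm.2.2 γ hγ m' (hwr.2.1 hm'r) hm'2)
    obtain ⟨m, hmA, w, hw1, hw2⟩ := hconc (⟨{γs}, (∅ : Finset M)⟩ : CP K M)
    obtain ⟨-, mh, hmh1, hmh2⟩ := hAstarZ.1 hmA
    exact hw1.2.2 γs (Finset.mem_singleton_self _) mh (hw2.2.1 hmh1) (Finset.notMem_empty _) hmh2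


end Aux

/-- if κ is inaccessible then every <κ-linked poset is κ-stationarily layered;
conversely, if κ is uncountable regular but not strongly inaccessible, there is a <κ-linked
poset of size at most κ that is not κ-stationarily layered. -/
theorem stmt_8 (κ : Cardinal.{u}) :
    (κ.IsInaccessible →
      ∀ (P : Type u) [PartialOrder P], LtLinked κ P → StationarilyLayered κ P) ∧
    (κ.IsRegular → ℵ₀ < κ → ¬ κ.IsInaccessible →
      ∃ (P : Type u) (inst : PartialOrder P),
        @LtLinked κ P inst ∧ #P ≤ κ ∧ ¬ @StationarilyLayered κ P inst) := by
  constructor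
  · intro hκ P _ hlink
    exact part1 κ hκ P hlink
  · intro hreg hω hni
    classical
    -- extract a witness to the failure of the strong limit property
    obtain ⟨x, hx0, hxκ, h2x⟩ : ∃ x : Cardinal.{u}, ℵ₀ ≤ x ∧ x < κ ∧ κ ≤ 2 ^ x := by
      have hnsl : ¬ κ.IsStrongLimit := fun h => hni ⟨hω, hreg.le_cof_ord, h.isStrongPrelimit⟩
      rw [Cardinal.isStrongLimit_iff, Cardinal.IsStrongPrelimit] at hnsl
      push_neg at hnsl
      obtain ⟨x, hx1, hx2⟩ := hnsl (by
        intro h0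
        rw [h0] at hω
        exact absurd hω (by simp [aleph0_pos.not_gt]))
      refine ⟨x, ?_, hx1, hx2⟩
      by_contra h
      push_neg at h
      have h2 : (2 : Cardinal) ^ x < ℵ₀ := power_lt_aleph0 (nat_lt_aleph0 2) h
      exact absurd hx2 (not_le.2 (h2.trans hω))
    set K := κ.ord.ToType with hKdef
    set Λ := x.ord.ToType with hΛdef
    set M := (Finset Λ × Finset Λ) with hMdef
    have hKmk : #K = κ := by rw [hKdef, Cardinal.mk_toType, card_ord]
    have hΛmk : #Λ = x := by rw [hΛdef, Cardinal.mk_toType, card_ord]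
    haveI : Infinite Λ := by rw [Cardinal.infinite_iff, hΛmk]; exact hx0
    haveI : Nonempty Λ := inferInstance
    have hemb : Nonempty (K ↪ Set Λ) := by
      rw [← Cardinal.le_def, hKmk, mk_set, hΛmk]
      exact h2x
    obtain ⟨ι⟩ := hemb
    set Agr : K → M → Prop := fun γ m => (∀ α ∈ m.1, α ∈ ι γ) ∧ (∀ α ∈ m.2, α ∉ ι γ)
      with hAgrdef
    have hMmk : #M = x := by
      rw [hMdef, mk_prod]
      simp only [lift_id]
      rw [mk_finset_of_infinite, hΛmk, mul_eq_self hx0]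
    haveI : Infinite M := by rw [Cardinal.infinite_iff, hMmk]; exact hx0
    have hFM : #(Finset M) < κ := by rw [mk_finset_of_infinite, hMmk]; exact hxκ
    have hsep : ∀ (s : Finset K) (γs : K), γs ∉ s →
        ∃ m : M, Agr γs m ∧ ∀ γ ∈ s, ¬ Agr γ m := by
      intro s γs hγs
      have hdiff : ∀ γ : K, γ ≠ γs → ∃ α : Λ, ¬(α ∈ ι γ ↔ α ∈ ι γs) := by
        intro γ hγ
        by_contra h
        push_neg at h
        exact hγ (ι.injective (Set.ext fun α => h α))
      set d : K → Λ := fun γ =>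
        if h : ∃ α : Λ, ¬(α ∈ ι γ ↔ α ∈ ι γs) then h.choose else Classical.arbitrary Λ
        with hddef
      have hd : ∀ γ : K, γ ≠ γs → ¬(d γ ∈ ι γ ↔ d γ ∈ ι γs) := by
        intro γ hγ
        have hex := hdiff γ hγ
        simp only [hddef, dif_pos hex]
        exact hex.choose_spec
      refine ⟨((s.filter fun γ => d γ ∈ ι γs).image d,
        (s.filter fun γ => d γ ∉ ι γs).image d), ⟨?_, ?_⟩, ?_⟩
      · intro α hα
        obtain ⟨γ, hγ, rfl⟩ := Finset.mem_image.1 hα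
        exact (Finset.mem_filter.1 hγ).2
      · intro α hα
        obtain ⟨γ, hγ, rfl⟩ := Finset.mem_image.1 hα
        exact (Finset.mem_filter.1 hγ).2
      · intro γ hγ hA
        have hne : γ ≠ γs := fun h => hγs (h ▸ hγ)
        have hdγ := hd γ hne
        by_cases hc : d γ ∈ ι γs
        · have hmem : d γ ∈ (s.filter fun γ' => d γ' ∈ ι γs).image d :=
            Finset.mem_image.2 ⟨γ, Finset.mem_filter.2 ⟨hγ, hc⟩, rfl⟩
          exact hdγ ⟨fun _ => hc, fun _ => hA.1 (d γ) hmem⟩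
        · have hmem : d γ ∈ (s.filter fun γ' => d γ' ∉ ι γs).image d :=
            Finset.mem_image.2 ⟨γ, Finset.mem_filter.2 ⟨hγ, hc⟩, rfl⟩
          exact hdγ ⟨fun h => absurd h (hA.2 (d γ) hmem), fun h => absurd h hc⟩
    obtain ⟨hlink, hcard, hnst⟩ := part2core κ hreg hω Agr hKmk hFM hsep
    exact ⟨CP K M, cOrd Agr, hlink, hcard, hnst⟩

end Layered
end

section
/- If κ is an uncountable regular cardinal and T is a tree of height κ with no cofinal branches, then the partial order P(T) of finite partial functions from T to ω that are injective on chains of T, ordered by reverse inclusion, satisfies the κ-chain condition. -/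
universe u v

open Cardinal

namespace Layered

variable {P : Type u}

/-- `lev` exhibits the partial order `T` as a set-theoretic tree: it has a root,
`lev` is the level function (order type of the set of predecessors), the predecessors
of each node are linearly ordered, and each node has predecessors on all smaller levels. -/
def IsLeveledTree (T : Type u) [PartialOrder T] (lev : T → Ordinal.{v}) : Prop :=
  (∃ r : T, ∀ t, r ≤ t) ∧
  (∀ s t : T, s < t → lev s < lev t) ∧
  (∀ s s' t : T, s ≤ t → s' ≤ t → s ≤ s' ∨ s' ≤ s) ∧
  ∀ t : T, ∀ α : Ordinal.{v}, α < lev t → ∃ s : T, s ≤ t ∧ lev s = α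

/-- The tree has height `o`. -/
def HasHeight (T : Type u) [PartialOrder T] (lev : T → Ordinal.{v}) (o : Ordinal.{v}) : Prop :=
  (∀ t, lev t < o) ∧ ∀ α < o, ∃ t, lev t = α

/-- A cofinal branch: a downward closed chain meeting every level below `o`. -/
def CofinalBranch (T : Type u) [PartialOrder T] (lev : T → Ordinal.{v}) (o : Ordinal.{v})
    (B : Set T) : Prop :=
  (∀ t ∈ B, ∀ s, s ≤ t → s ∈ B) ∧ IsChain (· ≤ ·) B ∧ ∀ α < o, ∃ t ∈ B, lev t = α

/-- A κ-Aronszajn tree: height κ, levels of size < κ, no cofinal branch. -/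
def Aronszajn (κ : Cardinal.{u}) (T : Type u) [PartialOrder T] (lev : T → Ordinal.{u}) : Prop :=
  IsLeveledTree T lev ∧ HasHeight T lev κ.ord ∧
  (∀ α : Ordinal.{u}, #{t : T | lev t = α} < κ) ∧
  ¬ ∃ B : Set T, CofinalBranch T lev κ.ord B

/-- `S` is nonstationary with respect to the tree `T`: there is a regressive map on the nodes
with level in `S` such that each preimage admits a colouring by fewer than κ colours that is
injective on chains. -/
def NonstatWrt (κ : Cardinal.{u}) (T : Type v) [PartialOrder T] (lev : T → Ordinal.{u})
    (S : Set Ordinal.{u}) : Prop :=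
  ∃ r : T → T,
    (∀ t : T, lev t ∈ S → (∃ s, s < t) → r t < t) ∧
    ∀ t : T, ∃ μ : Cardinal.{u}, μ < κ ∧ ∃ c : T → μ.ord.ToType,
      ∀ u v : T, lev u ∈ S → lev v ∈ S → r u = t → r v = t →
        u ≤ v → c u = c v → u = v

/-- Conditions of the specialization forcing: finite partial functions from `T` to `ω`
(coded as finite functional graphs) that are injective on chains of `T`. -/
def SpecCond (T : Type u) [PartialOrder T] : Type u :=
  {s : Finset (T × ℕ) //
    (∀ p ∈ s, ∀ q ∈ s, (p : T × ℕ).1 = (q : T × ℕ).1 → p = q) ∧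
    ∀ p ∈ s, ∀ q ∈ s, ((p : T × ℕ).1 ≤ (q : T × ℕ).1 ∨ (q : T × ℕ).1 ≤ (p : T × ℕ).1) →
      (p : T × ℕ).2 = (q : T × ℕ).2 → p = q}

/-- The specialization forcing `ℙ(T)`, ordered by reverse inclusion. -/
instance specPO (T : Type u) [PartialOrder T] : PartialOrder (SpecCond T) where
  le p q := q.1 ⊆ p.1
  le_refl p := Finset.Subset.refl _
  le_trans p q r h1 h2 := Finset.Subset.trans h2 h1
  le_antisymm p q h1 h2 := Subtype.ext (Finset.Subset.antisymm h2 h1)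

theorem pigeonN {κ : Cardinal.{u}} (hreg : κ.IsRegular) (hunc : ℵ₀ < κ)
    {ι : Type u} (f : ι → ℕ) (hι : κ ≤ #ι) : ∃ m : ℕ, κ ≤ #{i | f i = m} := by
  by_contra h
  push_neg at h
  have hu : (⋃ m : ULift.{u} ℕ, {i | f i = m.down}) = Set.univ := by
    ext i; simp only [Set.mem_iUnion, Set.mem_univ, iff_true]
    exact ⟨ULift.up (f i), rfl⟩
  have hlt : #(⋃ m : ULift.{u} ℕ, {i | f i = m.down}) < κ := by
    rw [Cardinal.card_iUnion_lt_iff_forall_of_isRegular hreg (by simpa using hunc)]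
    exact fun m => h m.down
  rw [hu, Cardinal.mk_univ] at hlt
  exact absurd hι hlt.not_ge

theorem pigeonC {κ : Cardinal.{u}} (hreg : κ.IsRegular) (hunc : ℵ₀ < κ)
    {ι : Type u} {γ : Type*} [Countable γ] (g : ι → γ) (hι : κ ≤ #ι) :
    ∃ c : γ, κ ≤ #{i | g i = c} := by
  obtain ⟨e⟩ := nonempty_embedding_nat γ
  obtain ⟨m, hm⟩ := pigeonN hreg hunc (fun i => e (g i)) hι
  have hne : {i | e (g i) = m}.Nonempty := by
    by_contra h
    rw [Set.not_nonempty_iff_eq_empty] at h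
    rw [h] at hm
    simp only [Cardinal.mk_emptyCollection] at hm
    exact absurd (hm.trans_lt' hreg.pos).false (by simp)
  obtain ⟨i0, hi0⟩ := hne
  refine ⟨g i0, le_trans hm (Cardinal.mk_le_mk_of_subset ?_)⟩
  intro i hi
  exact e.injective (hi.trans hi0.symm)

/-- The Δ-system lemma for κ regular uncountable. -/
theorem deltaSystem {κ : Cardinal.{u}} (hreg : κ.IsRegular) (hunc : ℵ₀ < κ)
    {X : Type u} : ∀ (n : ℕ) {ι : Type u} (F : ι → Finset X), κ ≤ #ι →
    (∀ i, (F i).card ≤ n) →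
    ∃ (I : Set ι) (R : Set X), κ ≤ #I ∧
      ∀ i ∈ I, ∀ j ∈ I, i ≠ j → (F i : Set X) ∩ (F j : Set X) = R := by
  classical
  intro n
  induction n with
  | zero =>
    intro ι F hι hcard
    refine ⟨Set.univ, ∅, by simpa using hι, fun i _ j _ _ => ?_⟩
    have h0 : F i = ∅ := Finset.card_eq_zero.mp (Nat.le_zero.mp (hcard i))
    simp [h0]
  | succ n ih =>
    intro ι F hι hcard
    by_cases hx : ∃ x : X, κ ≤ #{i | x ∈ F i}
    · obtain ⟨x, hxκ⟩ := hx
      have hcard' : ∀ i : {i | x ∈ F i}, ((F i.1).erase x).card ≤ n := by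
        intro i
        rw [Finset.card_erase_of_mem i.2]
        have := hcard i.1; omega
      obtain ⟨I', R', hI'κ, hI'⟩ := ih (fun i : {i | x ∈ F i} => (F i.1).erase x) hxκ hcard'
      refine ⟨Subtype.val '' I', insert x R', ?_, ?_⟩
      · rwa [Cardinal.mk_image_eq Subtype.val_injective]
      · rintro _ ⟨i', hi', rfl⟩ _ ⟨j', hj', rfl⟩ hne
        have hne' : i' ≠ j' := fun h => hne (congrArg Subtype.val h)
        have h1 := hI' i' hi' j' hj' hne'
        ext y
        constructor
        · rintro ⟨hyi, hyj⟩
          by_cases hyx : y = x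
          · exact Or.inl hyx
          · refine Or.inr ?_
            rw [← h1]
            constructor
            · simp only [Finset.coe_erase, Set.mem_diff, Finset.mem_coe,
                Set.mem_singleton_iff]
              exact ⟨hyi, hyx⟩
            · simp only [Finset.coe_erase, Set.mem_diff, Finset.mem_coe,
                Set.mem_singleton_iff]
              exact ⟨hyj, hyx⟩
        · rintro (rfl | hyR)
          · exact ⟨i'.2, j'.2⟩
          · rw [← h1] at hyR
            obtain ⟨h2, h3⟩ := hyR
            simp only [Finset.coe_erase, Set.mem_diff, Finset.mem_coe] at h2 h3
            exact ⟨h2.1, h3.1⟩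
    · push_neg at hx
      have hzorn := zorn_subset
        {G : Set ι | ∀ i ∈ G, ∀ j ∈ G, i ≠ j → (F i : Set X) ∩ (F j : Set X) = ∅} ?_
      · obtain ⟨G, hGmax⟩ := hzorn
        have hGgood := hGmax.prop
        refine ⟨G, ∅, ?_, hGgood⟩
        by_contra hG
        push_neg at hG
        set Bad := G ∪ ⋃ (i : G), ⋃ (x : (F i.1 : Set X)), {j | x.1 ∈ F j} with hBad
        have hBadlt : #Bad < κ := by
          refine lt_of_le_of_lt (Cardinal.mk_union_le _ _)
            (Cardinal.add_lt_of_lt hreg.aleph0_le hG ?_)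
          rw [Cardinal.card_iUnion_lt_iff_forall_of_isRegular hreg hG]
          intro i
          have hfin : #(F i.1 : Set X) < κ :=
            lt_trans (Cardinal.lt_aleph0_of_finite _) hunc
          rw [Cardinal.card_iUnion_lt_iff_forall_of_isRegular hreg hfin]
          exact fun y => hx y.1
        obtain ⟨j, hj⟩ : ∃ j, j ∉ Bad := by
          by_contra h
          push_neg at h
          have hsub : (Set.univ : Set ι) ⊆ Bad := fun j _ => h j
          have h2 : #(Set.univ : Set ι) ≤ #Bad := Cardinal.mk_le_mk_of_subset hsub
          rw [Cardinal.mk_univ] at h2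
          exact absurd (hι.trans h2) hBadlt.not_ge
        have hjG : j ∉ G := fun h => hj (Or.inl h)
        have hdisj : ∀ i ∈ G, (F i : Set X) ∩ (F j : Set X) = ∅ := by
          intro i hi
          rw [Set.eq_empty_iff_forall_notMem]
          rintro y ⟨hy1, hy2⟩
          exact hj (Or.inr (Set.mem_iUnion.mpr ⟨⟨i, hi⟩,
            Set.mem_iUnion.mpr ⟨⟨y, hy1⟩, hy2⟩⟩))
        have hnew : insert j G ∈
            {G : Set ι | ∀ i ∈ G, ∀ j ∈ G, i ≠ j → (F i : Set X) ∩ (F j : Set X) = ∅} := by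
          intro a ha b hb hab
          rcases ha with ha | ha <;> rcases hb with hb | hb
          · exact absurd (ha.trans hb.symm) hab
          · subst ha; rw [Set.inter_comm]; exact hdisj b hb
          · subst hb; exact hdisj a ha
          · exact hGgood a ha b hb hab
        exact hjG (hGmax.2 hnew (Set.subset_insert j G) (Set.mem_insert j G))
      · intro c hc hchain
        refine ⟨⋃₀ c, ?_, fun s hs => Set.subset_sUnion_of_mem hs⟩
        rintro i ⟨s, hs, his⟩ j ⟨t, ht, hjt⟩ hij
        rcases eq_or_ne s t with rfl | hst
        · exact hc hs i his j hjt hij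
        rcases hchain hs ht hst with h | h
        · exact hc ht i (h his) j hjt hij
        · exact hc hs i his j (h hjt) hij


/-- The filter of co-`<κ` sets on a type of size `≥ κ`, `κ` infinite. -/
def cosmall (κ : Cardinal.{u}) (ι : Type u) (hκ : ℵ₀ ≤ κ) : Filter ι where
  sets := {s | #(sᶜ : Set ι) < κ}
  univ_sets := by
    simp only [Set.mem_setOf_eq, Set.compl_univ, Cardinal.mk_emptyCollection]
    exact lt_of_lt_of_le (by simp [Cardinal.aleph0_pos]) hκ
  sets_of_superset := by
    intro s t hs hst
    exact lt_of_le_of_lt (Cardinal.mk_le_mk_of_subset (Set.compl_subset_compl.mpr hst)) hs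
  inter_sets := by
    intro s t hs ht
    simp only [Set.mem_setOf_eq, Set.compl_inter]
    exact lt_of_le_of_lt (Cardinal.mk_union_le _ _) (Cardinal.add_lt_of_lt hκ hs ht)

theorem cosmall_neBot {κ : Cardinal.{u}} {ι : Type u} (hκ : ℵ₀ ≤ κ) (hι : κ ≤ #ι) :
    (cosmall κ ι hκ).NeBot := by
  rw [Filter.neBot_iff]
  intro h
  have : (∅ : Set ι) ∈ cosmall κ ι hκ := by rw [h]; trivial
  have h2 : #((∅ : Set ι)ᶜ : Set ι) < κ := this
  rw [Set.compl_empty, Cardinal.mk_univ] at h2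
  exact absurd hι h2.not_ge

theorem mem_of_cosmall {κ : Cardinal.{u}} {ι : Type u} (hκ : ℵ₀ ≤ κ) (hι : κ ≤ #ι)
    {U : Ultrafilter ι} (hU : (U : Filter ι) ≤ cosmall κ ι hκ)
    {s : Set ι} (hs : #(sᶜ : Set ι) < κ) : s ∈ U := hU hs

theorem big_of_mem {κ : Cardinal.{u}} {ι : Type u} (hκ : ℵ₀ ≤ κ) (hι : κ ≤ #ι)
    {U : Ultrafilter ι} (hU : (U : Filter ι) ≤ cosmall κ ι hκ)
    {s : Set ι} (hs : s ∈ U) : κ ≤ #s := by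
  by_contra h
  push_neg at h
  have hsc : sᶜ ∈ U := by
    apply hU
    show #((sᶜ)ᶜ : Set ι) < κ
    rwa [compl_compl]
  have := Filter.inter_mem hs hsc
  rw [Set.inter_compl_self] at this
  exact Ultrafilter.empty_notMem this

theorem ult_const {ι : Type u} (U : Ultrafilter ι) {γ : Type} [Finite γ]
    (c : ι → γ) : ∃ a, {j | c j = a} ∈ U := by
  by_contra h
  push_neg at h
  have h2 : ∀ a, {j | c j = a}ᶜ ∈ U := fun a =>
    Ultrafilter.compl_mem_iff_notMem.mpr (h a)
  have h3 : (⋂ a, {j | c j = a}ᶜ) ∈ U := Filter.iInter_mem.mpr h2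
  have h4 : (⋂ a, ({j | c j = a}ᶜ : Set ι)) = ∅ := by
    rw [Set.eq_empty_iff_forall_notMem]
    intro j hj
    exact (Set.mem_iInter.mp hj (c j)) rfl
  rw [h4] at h3
  exact Ultrafilter.empty_notMem h3

section Tree
variable {T : Type u} [PartialOrder T] {lev : T → Ordinal.{u}} {κ : Cardinal.{u}}

/-- In a leveled tree of height κ.ord with no cofinal branch, every chain has size `< κ`. -/
theorem chain_small (hreg : κ.IsRegular) (hunc : ℵ₀ < κ)
    (htree : IsLeveledTree T lev) (hht : HasHeight T lev κ.ord)
    (hnb : ¬ ∃ B : Set T, CofinalBranch T lev κ.ord B)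
    (C : Set T) (hC : IsChain (· ≤ ·) C) : #C < κ := by
  by_contra h
  push_neg at h
  obtain ⟨-, hmono, hcomp, hpred⟩ := htree
  set B : Set T := {s | ∃ t ∈ C, s ≤ t} with hB
  refine hnb ⟨B, ?_, ?_, ?_⟩
  · rintro t ⟨t', ht', htt'⟩ s hst
    exact ⟨t', ht', hst.trans htt'⟩
  · rintro s ⟨t, ht, hst⟩ s' ⟨t', ht', hst'⟩ hss'
    rcases eq_or_ne t t' with rfl | htne
    · exact hcomp s s' t hst hst'
    · rcases hC ht ht' htne with h1 | h1
      · exact hcomp s s' t' (hst.trans h1) hst'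
      · exact hcomp s s' t hst (hst'.trans h1)
  · intro α hα
    have hex : ∃ t ∈ C, α ≤ lev t := by
      by_contra hcon
      push_neg at hcon
      have hinj : Function.Injective
          (fun t : C => (⟨lev t.1, hcon t.1 t.2⟩ : Set.Iio α)) := by
        rintro ⟨t, ht⟩ ⟨t', ht'⟩ hteq
        simp only [Subtype.mk.injEq] at hteq ⊢
        by_contra htne
        rcases hC ht ht' htne with h1 | h1
        · exact absurd (congrArg Subtype.val hteq) (hmono t t' (lt_of_le_of_ne h1 htne)).ne
        · exact absurd (congrArg Subtype.val hteq).symm (hmono t' t (lt_of_le_of_ne h1 (Ne.symm htne))).ne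
      have hle : Cardinal.lift.{u+1} #C ≤ Cardinal.lift.{u} #(Set.Iio α) :=
        Cardinal.lift_mk_le'.mpr ⟨⟨_, hinj⟩⟩
      rw [Ordinal.mk_Iio_ordinal, Cardinal.lift_lift] at hle
      have hκα : κ ≤ α.card := by
        have := h.trans (Cardinal.lift_le.mp hle)
        exact this
      exact absurd (Cardinal.lt_ord.mp hα) hκα.not_gt
    obtain ⟨t, htC, hαt⟩ := hex
    rcases eq_or_lt_of_le hαt with heq | hlt
    · exact ⟨t, ⟨t, htC, le_refl t⟩, heq.symm⟩
    · obtain ⟨s, hst, hs⟩ := hpred t α hlt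
      exact ⟨s, ⟨t, htC, hst⟩, hs⟩

end Tree


theorem no_linked_family {κ : Cardinal.{u}} (hreg : κ.IsRegular) (hunc : ℵ₀ < κ)
    {T : Type u} [PartialOrder T]
    (hcomp : ∀ s s' t : T, s ≤ t → s' ≤ t → s ≤ s' ∨ s' ≤ s)
    (hchain : ∀ C : Set T, IsChain (· ≤ ·) C → #C < κ)
    {ι : Type u} (hι : κ ≤ #ι) (F : ι → Finset T) {n : ℕ}
    (hcard : ∀ i, (F i).card = n)
    (hdisj : ∀ i j : ι, i ≠ j → ∀ x, x ∈ F i → x ∈ F j → False)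
    (hlink : ∀ i j : ι, i ≠ j → ∃ u v, u ∈ F i ∧ v ∈ F j ∧ (u ≤ v ∨ v ≤ u)) :
    False := by
  classical
  have hone : (1 : Cardinal.{u}) < κ := Cardinal.one_lt_aleph0.trans hunc
  have hne : Nonempty ι := Cardinal.mk_ne_zero_iff.mp (hreg.pos.trans_le hι).ne'
  obtain ⟨i0⟩ := hne
  have hsingl : ∀ i : ι, #({i} : Set ι) < κ := by
    intro i
    rw [Cardinal.mk_singleton]
    exact hone
  obtain ⟨i1, hi1⟩ : ∃ i1 : ι, i1 ≠ i0 := by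
    by_contra hcon
    push_neg at hcon
    have : (Set.univ : Set ι) ⊆ {i0} := fun j _ => hcon j
    have h2 : #(Set.univ : Set ι) ≤ #({i0} : Set ι) := Cardinal.mk_le_mk_of_subset this
    rw [Cardinal.mk_univ] at h2
    exact absurd (hι.trans h2) (hsingl i0).not_ge
  have hn : n ≠ 0 := by
    obtain ⟨u, v, hu, -, -⟩ := hlink i1 i0 hi1
    rw [← hcard i1]
    exact Finset.card_ne_zero_of_mem hu
  -- enumerations of the sets
  set e : ι → Fin n → T := fun i k => ((F i).equivFin.symm (Fin.cast (hcard i).symm k) : T)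
    with he_def
  have he : ∀ i k, e i k ∈ F i := fun i k => ((F i).equivFin.symm _).2
  have hsurj : ∀ i, ∀ v ∈ F i, ∃ k : Fin n, e i k = v := by
    intro i v hv
    refine ⟨Fin.cast (hcard i) ((F i).equivFin ⟨v, hv⟩), ?_⟩
    simp [he_def]
  -- the uniform ultrafilter
  haveI hnb := cosmall_neBot (κ := κ) (ι := ι) hreg.aleph0_le hι
  set U : Ultrafilter ι := Ultrafilter.of (cosmall κ ι hreg.aleph0_le) with hUdef
  have hU : (U : Filter ι) ≤ cosmall κ ι hreg.aleph0_le := Ultrafilter.of_le _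
  have hcompl : ∀ i : ι, ({i}ᶜ : Set ι) ∈ U := by
    intro i
    apply hU
    show #(({i}ᶜ : Set ι)ᶜ : Set ι) < κ
    rw [compl_compl]
    exact hsingl i
  -- witnesses
  set P : ι → ι → Fin n × Fin n × Bool → Prop := fun i j p =>
    (p.2.2 = true → e i p.1 ≤ e j p.2.1) ∧ (p.2.2 = false → e j p.2.1 ≤ e i p.1)
    with hP_def
  have hPex : ∀ i j : ι, i ≠ j → ∃ p, P i j p := by
    intro i j hij
    obtain ⟨u, v, hu, hv, hor⟩ := hlink i j hij
    obtain ⟨k, hk⟩ := hsurj i u hu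
    obtain ⟨l, hl⟩ := hsurj j v hv
    rcases hor with h | h
    · exact ⟨(k, l, true), fun _ => by rw [hk, hl]; exact h, fun hf => by simp at hf⟩
    · exact ⟨(k, l, false), fun hf => by simp at hf, fun _ => by rw [hk, hl]; exact h⟩
  set wit : ι → ι → Fin n × Fin n × Bool := fun i j =>
    if h : ∃ p, P i j p then h.choose else ((⟨0, Nat.pos_of_ne_zero hn⟩ : Fin n),
      (⟨0, Nat.pos_of_ne_zero hn⟩ : Fin n), true) with hwit_def
  have hwit : ∀ i j : ι, i ≠ j → P i j (wit i j) := by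
    intro i j hij
    have h := hPex i j hij
    simp only [hwit_def, dif_pos h]
    exact h.choose_spec
  -- stabilize the witness pattern along the ultrafilter
  have hconst : ∀ i : ι, ∃ a, {j | wit i j = a} ∈ U := fun i => ult_const U (wit i)
  set a : ι → Fin n × Fin n × Bool := fun i => (hconst i).choose with ha_def
  have ha : ∀ i, {j | wit i j = a i} ∈ U := fun i => (hconst i).choose_spec
  set Y : ι → Set ι := fun i => {j | wit i j = a i} ∩ {i}ᶜ with hY_def
  have hYU : ∀ i, Y i ∈ U := fun i => Filter.inter_mem (ha i) (hcompl i)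
  set ustar : ι → T := fun i => e i (a i).1 with hustar_def
  have hustar_mem : ∀ i, ustar i ∈ F i := fun i => he i (a i).1
  -- the downward direction is impossible
  have hchain_below : ∀ t : T, IsChain (· ≤ ·) {s : T | s ≤ t} := by
    intro t s hs s' hs' _
    exact hcomp s s' t hs hs'
  have hdir : ∀ i, (a i).2.2 = true := by
    intro i
    by_contra hfalse
    rw [Bool.not_eq_true] at hfalse
    have hmap : ∀ j ∈ Y i, (e j (a i).2.1) ∈ {s : T | s ≤ ustar i} := by
      rintro j ⟨hj1, hj2⟩
      have hji : i ≠ j := fun h => hj2 h.symm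
      have hw := hwit i j hji
      rw [Set.mem_setOf_eq] at hj1
      rw [hj1] at hw
      exact hw.2 hfalse
    have hinj : Function.Injective
        (fun j : Y i => (⟨e j.1 (a i).2.1, hmap j.1 j.2⟩ : {s : T | s ≤ ustar i})) := by
      rintro ⟨j, hj⟩ ⟨j', hj'⟩ heq
      simp only [Subtype.mk.injEq] at heq
      refine Subtype.ext ?_
      by_contra hne
      refine hdisj j j' hne (e j (a i).2.1) (he j (a i).2.1) ?_
      rw [heq]
      exact he j' (a i).2.1
    have hbig : κ ≤ #(Y i) := big_of_mem hreg.aleph0_le hι hU (hYU i)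
    have hsmall : #{s : T | s ≤ ustar i} < κ := hchain _ (hchain_below (ustar i))
    exact absurd ((hbig.trans (Cardinal.mk_le_of_injective hinj)).trans_lt hsmall)
      (lt_irrefl κ)
  -- stabilize the second index
  obtain ⟨lstar, hlstar⟩ := pigeonC hreg hunc (fun i => (a i).2.1) hι
  set J : Set ι := {i | (a i).2.1 = lstar} with hJ_def
  -- the selected nodes form a chain of size κ
  have hJinj : Function.Injective (fun i : J => ustar i.1) := by
    rintro ⟨i, hi⟩ ⟨i', hi'⟩ heq
    simp only at heq
    refine Subtype.ext ?_
    by_contra hne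
    exact hdisj i i' hne (ustar i) (hustar_mem i) (by rw [heq]; exact hustar_mem i')
  have hCchain : IsChain (· ≤ ·) (Set.range (fun i : J => ustar i.1)) := by
    rintro _ ⟨⟨i, hi⟩, rfl⟩ _ ⟨⟨i', hi'⟩, rfl⟩ hne
    have hii' : i ≠ i' := by
      intro h
      apply hne
      simp only [h]
    obtain ⟨j, hj, hj'⟩ := Ultrafilter.nonempty_of_mem (Filter.inter_mem (hYU i) (hYU i'))
    obtain ⟨hj1, hj2⟩ := hj
    obtain ⟨hj'1, hj'2⟩ := hj'
    have hij : i ≠ j := fun h => hj2 h.symm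
    have hij' : i' ≠ j := fun h => hj'2 h.symm
    have hw := hwit i j hij
    have hw' := hwit i' j hij'
    rw [Set.mem_setOf_eq] at hj1 hj'1
    rw [hj1] at hw
    rw [hj'1] at hw'
    have h1 : ustar i ≤ e j (a i).2.1 := hw.1 (hdir i)
    have h2 : ustar i' ≤ e j (a i').2.1 := hw'.1 (hdir i')
    rw [hi] at h1
    rw [hi'] at h2
    exact hcomp _ _ (e j lstar) h1 h2
  have hCbig : κ ≤ #(Set.range (fun i : J => ustar i.1)) := by
    rw [Cardinal.mk_range_eq _ hJinj]
    exact hlstar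
  exact absurd (hCbig.trans_lt (hchain _ hCchain)) (lt_irrefl κ)


/-- Helper: in a type of size `≥ κ > 1`, every element has a distinct companion. -/
theorem exists_ne_of_big {κ : Cardinal.{u}} {ι : Type u} (hκ1 : 1 < κ) (hι : κ ≤ #ι)
    (i : ι) : ∃ j : ι, j ≠ i := by
  by_contra hcon
  push_neg at hcon
  have hsub : (Set.univ : Set ι) ⊆ {i} := fun j _ => hcon j
  have h2 : #(Set.univ : Set ι) ≤ #({i} : Set ι) := Cardinal.mk_le_mk_of_subset hsub
  rw [Cardinal.mk_univ, Cardinal.mk_singleton] at h2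
  exact absurd (hι.trans h2) hκ1.not_ge

/-- The node-domain of a condition. -/
noncomputable def domS {T : Type u} [PartialOrder T] (q : SpecCond T) : Finset T :=
  @Finset.image _ _ (Classical.decEq T) Prod.fst q.1

theorem mem_domS {T : Type u} [PartialOrder T] {q : SpecCond T} {t : T} :
    t ∈ domS q ↔ ∃ mv : ℕ, (t, mv) ∈ q.1 := by
  unfold domS
  rw [@Finset.mem_image _ _ (Classical.decEq T)]
  constructor
  · rintro ⟨a, ha, hat⟩
    exact ⟨a.2, by rwa [← hat, Prod.mk.eta]⟩
  · rintro ⟨mv, hmv⟩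
    exact ⟨(t, mv), hmv, rfl⟩


/-- if T is a tree of height κ without cofinal branches, the specialization
forcing ℙ(T) satisfies the κ-chain condition. -/
theorem stmt_10 (κ : Cardinal.{u}) (hreg : κ.IsRegular) (hunc : ℵ₀ < κ)
    (T : Type u) [PartialOrder T] (lev : T → Ordinal.{u})
    (htree : IsLeveledTree T lev) (hht : HasHeight T lev κ.ord)
    (hnb : ¬ ∃ B : Set T, CofinalBranch T lev κ.ord B) :
    CC κ (SpecCond T) := by
  classical
  have hcomp := htree.2.2.1
  have hchain := chain_small hreg hunc htree hht hnb
  have hone : (1 : Cardinal.{u}) < κ := Cardinal.one_lt_aleph0.trans hunc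
  intro A hA
  by_contra hbig
  rw [not_lt] at hbig
  -- level 0: the antichain as an indexed family
  set ι₀ : Type u := ↥A with hι₀
  set p₀ : ι₀ → SpecCond T := Subtype.val with hp₀
  have hι₀κ : κ ≤ #ι₀ := hbig
  have hinj₀ : Function.Injective p₀ := Subtype.val_injective
  have hinc₀ : ∀ i j : ι₀, i ≠ j → ¬ Compat (p₀ i) (p₀ j) := by
    intro i j hij
    exact hA (p₀ i) i.2 (p₀ j) j.2 (fun h => hij (Subtype.ext h))
  -- level 1: constant domain size
  obtain ⟨m, hm⟩ := pigeonN hreg hunc (fun i => (domS (p₀ i)).card) hι₀κ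
  set ι₁ : Type u := ↥{i : ι₀ | (domS (p₀ i)).card = m} with hι₁
  set p₁ : ι₁ → SpecCond T := fun i => p₀ i.1 with hp₁
  have hι₁κ : κ ≤ #ι₁ := hm
  have hinj₁ : Function.Injective p₁ := fun i j h =>
    Subtype.ext (hinj₀ h)
  have hinc₁ : ∀ i j : ι₁, i ≠ j → ¬ Compat (p₁ i) (p₁ j) := fun i j hij =>
    hinc₀ i.1 j.1 (fun h => hij (Subtype.ext h))
  have hcard₁ : ∀ i : ι₁, (domS (p₁ i)).card ≤ m := fun i => le_of_eq i.2
  -- level 2: Δ-system of domains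
  obtain ⟨I, R, hIκ, hIR⟩ := deltaSystem hreg hunc m (fun i : ι₁ => domS (p₁ i)) hι₁κ hcard₁
  set ι₂ : Type u := ↥I with hι₂
  set p₂ : ι₂ → SpecCond T := fun i => p₁ i.1 with hp₂
  have hι₂κ : κ ≤ #ι₂ := hIκ
  have hinj₂ : Function.Injective p₂ := fun i j h => Subtype.ext (hinj₁ h)
  have hinc₂ : ∀ i j : ι₂, i ≠ j → ¬ Compat (p₂ i) (p₂ j) := fun i j hij =>
    hinc₁ i.1 j.1 (fun h => hij (Subtype.ext h))
  have hDelta : ∀ i j : ι₂, i ≠ j →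
      (↑(domS (p₂ i)) ∩ ↑(domS (p₂ j)) : Set T) = R := by
    intro i j hij
    exact hIR i.1 i.2 j.1 j.2 (fun h => hij (Subtype.ext h))
  have hRsub : ∀ i : ι₂, R ⊆ ↑(domS (p₂ i)) := by
    intro i
    obtain ⟨j, hj⟩ := exists_ne_of_big hone hι₂κ i
    rw [← hDelta i j (fun h => hj h.symm)]
    exact Set.inter_subset_left
  have hRfin : R.Finite := by
    have hne : Nonempty ι₂ := Cardinal.mk_ne_zero_iff.mp (hreg.pos.trans_le hι₂κ).ne'
    obtain ⟨i⟩ := hne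
    exact Set.Finite.subset (Finset.finite_toSet (domS (p₂ i))) (hRsub i)
  haveI hRfin' : Finite ↥R := hRfin.to_subtype
  -- level 3: constant values on the root
  set v : ι₂ → (↥R → Option ℕ) := fun i t =>
    if h : ∃ mv : ℕ, (t.1, mv) ∈ (p₂ i).1 then some h.choose else none with hv_def
  obtain ⟨c, hc⟩ := pigeonC hreg hunc v hι₂κ
  set ι₃ : Type u := ↥{i : ι₂ | v i = c} with hι₃
  set p₃ : ι₃ → SpecCond T := fun i => p₂ i.1 with hp₃
  have hι₃κ : κ ≤ #ι₃ := hc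
  have hinj₃ : Function.Injective p₃ := fun i j h => Subtype.ext (hinj₂ h)
  have hinc₃ : ∀ i j : ι₃, i ≠ j → ¬ Compat (p₃ i) (p₃ j) := fun i j hij =>
    hinc₂ i.1 j.1 (fun h => hij (Subtype.ext h))
  have hDelta₃ : ∀ i j : ι₃, i ≠ j →
      (↑(domS (p₃ i)) ∩ ↑(domS (p₃ j)) : Set T) = R := fun i j hij =>
    hDelta i.1 j.1 (fun h => hij (Subtype.ext h))
  have hRsub₃ : ∀ i : ι₃, R ⊆ ↑(domS (p₃ i)) := fun i => hRsub i.1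
  have hval : ∀ i j : ι₃, ∀ t ∈ R, ∀ mv : ℕ,
      (t, mv) ∈ (p₃ i).1 → (t, mv) ∈ (p₃ j).1 := by
    intro i j t ht mv hmem
    have hveq : v i.1 = v j.1 := i.2.trans j.2.symm
    have hex : ∃ mv' : ℕ, ((⟨t, ht⟩ : ↥R).1, mv') ∈ (p₂ i.1).1 := ⟨mv, hmem⟩
    have hvi : v i.1 ⟨t, ht⟩ = some hex.choose := dif_pos hex
    have hchoose : (t, hex.choose) ∈ (p₃ i).1 := hex.choose_spec
    have hmv : hex.choose = mv := by
      have := (p₃ i).2.1 (t, hex.choose) hchoose (t, mv) hmem rfl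
      exact congrArg Prod.snd this
    by_cases hex' : ∃ mv' : ℕ, ((⟨t, ht⟩ : ↥R).1, mv') ∈ (p₂ j.1).1
    · have hvj : v j.1 ⟨t, ht⟩ = some hex'.choose := dif_pos hex'
      have : some hex'.choose = some hex.choose := by rw [← hvj, ← hveq, hvi]
      have h2 : hex'.choose = mv := (Option.some_injective _ this).trans hmv
      have := hex'.choose_spec
      rw [h2] at this
      exact this
    · have hvj : v j.1 ⟨t, ht⟩ = none := dif_neg hex'
      rw [hveq, hvj] at hvi
      exact absurd hvi.symm (Option.some_ne_none _)
  -- level 4: nonempty difference sets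
  set Fd : ι₃ → Finset T := fun i => (domS (p₃ i)).filter (fun x => x ∉ R) with hFd_def
  have hFdmem : ∀ (i : ι₃) (x : T), x ∈ Fd i ↔ x ∈ domS (p₃ i) ∧ x ∉ R := by
    intro i x
    simp [hFd_def]
  set S : Set ι₃ := {i | Fd i ≠ ∅} with hS_def
  have hSsub : (Sᶜ : Set ι₃).Subsingleton := by
    intro i hi j hj
    by_contra hij
    simp only [hS_def, Set.mem_compl_iff, Set.mem_setOf_eq, not_not] at hi hj
    have hdomR : ∀ k : ι₃, Fd k = ∅ → ∀ x ∈ domS (p₃ k), x ∈ R := by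
      intro k hk x hx
      by_contra hxR
      have : x ∈ Fd k := (hFdmem k x).mpr ⟨hx, hxR⟩
      rw [hk] at this
      exact absurd this (Finset.notMem_empty x)
    have : p₃ i = p₃ j := by
      apply Subtype.ext
      apply Finset.Subset.antisymm
      · intro q hq
        have hx : q.1 ∈ domS (p₃ i) := mem_domS.mpr ⟨q.2, by rwa [Prod.mk.eta]⟩
        have := hval i j q.1 (hdomR i hi q.1 hx) q.2 (by rwa [Prod.mk.eta])
        rwa [Prod.mk.eta] at this
      · intro q hq
        have hx : q.1 ∈ domS (p₃ j) := mem_domS.mpr ⟨q.2, by rwa [Prod.mk.eta]⟩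
        have := hval j i q.1 (hdomR j hj q.1 hx) q.2 (by rwa [Prod.mk.eta])
        rwa [Prod.mk.eta] at this
    exact hij (hinj₃ this)
  have hSκ : κ ≤ #S := by
    by_contra h
    rw [not_le] at h
    have h1 : #(Sᶜ : Set ι₃) ≤ 1 := Cardinal.mk_le_one_iff_set_subsingleton.mpr hSsub
    have h2 : #ι₃ ≤ #S + #(Sᶜ : Set ι₃) := le_of_eq (Cardinal.mk_sum_compl S).symm
    exact absurd (hι₃κ.trans h2)
      (Cardinal.add_lt_of_lt hreg.aleph0_le h (h1.trans_lt hone)).not_ge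
  set ι₄ : Type u := ↥S with hι₄
  set p₄ : ι₄ → SpecCond T := fun i => p₃ i.1 with hp₄
  -- level 5: constant cardinality of the difference sets
  obtain ⟨n, hn⟩ := pigeonN hreg hunc (fun i : ι₄ => (Fd i.1).card) hSκ
  set ι₅ : Type u := ↥{i : ι₄ | (Fd i.1).card = n} with hι₅
  set p₅ : ι₅ → SpecCond T := fun i => p₄ i.1 with hp₅
  set F₅ : ι₅ → Finset T := fun i => Fd i.1.1 with hF₅
  have hι₅κ : κ ≤ #ι₅ := hn
  have hcard₅ : ∀ i : ι₅, (F₅ i).card = n := fun i => i.2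
  have hne₅ : ∀ i j : ι₅, i ≠ j → (i.1.1 : ι₃) ≠ j.1.1 := by
    intro i j hij h
    exact hij (Subtype.ext (Subtype.ext h))
  have hinc₅ : ∀ i j : ι₅, i ≠ j → ¬ Compat (p₅ i) (p₅ j) := fun i j hij =>
    hinc₃ i.1.1 j.1.1 (hne₅ i j hij)
  have hdisj₅ : ∀ i j : ι₅, i ≠ j → ∀ x, x ∈ F₅ i → x ∈ F₅ j → False := by
    intro i j hij x hxi hxj
    obtain ⟨hxi1, hxi2⟩ := (hFdmem i.1.1 x).mp hxi
    obtain ⟨hxj1, hxj2⟩ := (hFdmem j.1.1 x).mp hxj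
    have : x ∈ (↑(domS (p₃ i.1.1)) ∩ ↑(domS (p₃ j.1.1)) : Set T) := ⟨hxi1, hxj1⟩
    rw [hDelta₃ i.1.1 j.1.1 (hne₅ i j hij)] at this
    exact hxi2 this
  -- linkedness
  have hlink₅ : ∀ i j : ι₅, i ≠ j →
      ∃ u v', u ∈ F₅ i ∧ v' ∈ F₅ j ∧ (u ≤ v' ∨ v' ≤ u) := by
    intro i j hij
    by_contra hcon
    push_neg at hcon
    apply hinc₅ i j hij
    have hij3 := hne₅ i j hij
    -- the union is a condition
    have hfun : ∀ q ∈ (p₅ i).1 ∪ (p₅ j).1, ∀ q' ∈ (p₅ i).1 ∪ (p₅ j).1,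
        (q : T × ℕ).1 = (q' : T × ℕ).1 → q = q' := by
      have key : ∀ a b : ι₅, a ≠ b → ∀ q ∈ (p₅ a).1, ∀ q' ∈ (p₅ b).1,
          (q : T × ℕ).1 = (q' : T × ℕ).1 → q = q' := by
        intro a b hab q hq q' hq' hqq
        have hdom : q.1 ∈ domS (p₃ a.1.1) := mem_domS.mpr ⟨q.2, by rwa [Prod.mk.eta]⟩
        have hdom' : q.1 ∈ domS (p₃ b.1.1) := by
          rw [hqq]
          exact mem_domS.mpr ⟨q'.2, by rwa [Prod.mk.eta]⟩
        have hR : q.1 ∈ R := by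
          have : q.1 ∈ (↑(domS (p₃ a.1.1)) ∩ ↑(domS (p₃ b.1.1)) : Set T) := ⟨hdom, hdom'⟩
          rwa [hDelta₃ a.1.1 b.1.1 (hne₅ a b hab)] at this
        have hqb : q ∈ (p₅ b).1 := by
          have := hval a.1.1 b.1.1 q.1 hR q.2 (by rwa [Prod.mk.eta])
          rwa [Prod.mk.eta] at this
        exact (p₅ b).2.1 q hqb q' hq' hqq
      intro q hq q' hq' hqq
      rcases Finset.mem_union.mp hq with h1 | h1 <;>
        rcases Finset.mem_union.mp hq' with h2 | h2
      · exact (p₅ i).2.1 q h1 q' h2 hqq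
      · exact key i j hij q h1 q' h2 hqq
      · exact key j i (fun h => hij h.symm) q h1 q' h2 hqq
      · exact (p₅ j).2.1 q h1 q' h2 hqq
    have hchn : ∀ q ∈ (p₅ i).1 ∪ (p₅ j).1, ∀ q' ∈ (p₅ i).1 ∪ (p₅ j).1,
        ((q : T × ℕ).1 ≤ (q' : T × ℕ).1 ∨ (q' : T × ℕ).1 ≤ (q : T × ℕ).1) →
        (q : T × ℕ).2 = (q' : T × ℕ).2 → q = q' := by
      have key : ∀ q ∈ (p₅ i).1, ∀ q' ∈ (p₅ j).1,
          ((q : T × ℕ).1 ≤ (q' : T × ℕ).1 ∨ (q' : T × ℕ).1 ≤ (q : T × ℕ).1) →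
          (q : T × ℕ).2 = (q' : T × ℕ).2 → q = q' := by
        intro q hq q' hq' hcmp hvals
        have hdomq : q.1 ∈ domS (p₃ i.1.1) := mem_domS.mpr ⟨q.2, by rwa [Prod.mk.eta]⟩
        have hdomq' : q'.1 ∈ domS (p₃ j.1.1) := mem_domS.mpr ⟨q'.2, by rwa [Prod.mk.eta]⟩
        by_cases hqR : q.1 ∈ R
        · have hqj : q ∈ (p₅ j).1 := by
            have := hval i.1.1 j.1.1 q.1 hqR q.2 (by rwa [Prod.mk.eta])
            rwa [Prod.mk.eta] at this
          exact (p₅ j).2.2 q hqj q' hq' hcmp hvals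
        by_cases hq'R : q'.1 ∈ R
        · have hq'i : q' ∈ (p₅ i).1 := by
            have := hval j.1.1 i.1.1 q'.1 hq'R q'.2 (by rwa [Prod.mk.eta])
            rwa [Prod.mk.eta] at this
          exact (p₅ i).2.2 q hq q' hq'i hcmp hvals
        exfalso
        have hc2 := hcon q.1 q'.1 ((hFdmem i.1.1 q.1).mpr ⟨hdomq, hqR⟩)
          ((hFdmem j.1.1 q'.1).mpr ⟨hdomq', hq'R⟩)
        rcases hcmp with h | h
        · exact hc2.1 h
        · exact hc2.2 h
      intro q hq q' hq' hcmp hvals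
      rcases Finset.mem_union.mp hq with h1 | h1 <;>
        rcases Finset.mem_union.mp hq' with h2 | h2
      · exact (p₅ i).2.2 q h1 q' h2 hcmp hvals
      · exact key q h1 q' h2 hcmp hvals
      · exact (key q' h2 q h1 hcmp.symm hvals.symm).symm
      · exact (p₅ j).2.2 q h1 q' h2 hcmp hvals
    exact ⟨⟨(p₅ i).1 ∪ (p₅ j).1, hfun, hchn⟩,
      Finset.subset_union_left, Finset.subset_union_right⟩
  exact no_linked_family hreg hunc hcomp hchain hι₅κ F₅ hcard₅ hdisj₅ hlink₅


end Layered
end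

section
/- If κ is an uncountable regular cardinal and T is a κ-Aronszajn tree, then the specialization partial order P(T) (finite partial functions T ⇀ ω injective on chains, ordered by reverse inclusion) is not κ-stationarily layered. -/
universe u v

open Cardinal

namespace Layered

variable {P : Type u}

section Aux

variable {T : Type u} [PartialOrder T]

theorem specLe_iff {p q : SpecCond T} : p ≤ q ↔ q.1 ⊆ p.1 := Iff.rfl

/-- The empty condition. -/
def emptyCond (T : Type u) [PartialOrder T] : SpecCond T :=
  ⟨∅, fun p hp => absurd hp (Finset.notMem_empty p),
      fun p hp => absurd hp (Finset.notMem_empty p)⟩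

/-- The singleton condition `{⟨x, n⟩}`. -/
def sing (x : T) (n : ℕ) : SpecCond T :=
  ⟨{(x, n)}, by
    constructor
    · intro p hp q hq _
      rw [Finset.mem_singleton] at hp hq; rw [hp, hq]
    · intro p hp q hq _ _
      rw [Finset.mem_singleton] at hp hq; rw [hp, hq]⟩

theorem mem_sing (x : T) (n : ℕ) : (x, n) ∈ (sing x n).1 := Finset.mem_singleton_self _

/-- The suborder of conditions supported on levels below `δ`. -/
def Plt (lev : T → Ordinal.{u}) (δ : Ordinal.{u}) : Set (SpecCond T) :=
  {p | ∀ z ∈ p.1, lev z.1 < δ}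

theorem sing_mem_Plt {lev : T → Ordinal.{u}} {δ : Ordinal.{u}} {x : T} {n : ℕ} :
    sing x n ∈ Plt lev δ ↔ lev x < δ := by
  constructor
  · intro h; exact h (x, n) (mem_sing x n)
  · intro h z hz
    rw [show (sing x n).1 = {(x,n)} from rfl, Finset.mem_singleton] at hz
    rw [hz]; exact h

theorem incompat_of_pair {p q : SpecCond T} {u v : T} {n : ℕ}
    (hu : (u, n) ∈ p.1) (hv : (v, n) ∈ q.1) (huv : u ≤ v) (hne : u ≠ v) :
    ¬ Compat p q := by
  rintro ⟨w, hwp, hwq⟩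
  have h1 : (u, n) ∈ w.1 := hwp hu
  have h2 : (v, n) ∈ w.1 := hwq hv
  have := w.2.2 _ h1 _ h2 (Or.inl huv) rfl
  exact hne (congrArg Prod.fst this)

theorem mk_Plt_lt {κ : Cardinal.{u}} (hreg : κ.IsRegular) (hunc : ℵ₀ < κ)
    (lev : T → Ordinal.{u}) (hlev : ∀ α : Ordinal.{u}, #{t : T | lev t = α} < κ)
    {δ : Ordinal.{u}} (hδ : δ < κ.ord) (x₀ : T) (hx₀ : lev x₀ < δ) :
    #(Plt (T := T) lev δ) < κ := by
  classical
  haveI : IsWellOrder δ.ToType (· < ·) := isWellOrder_lt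
  -- the set of nodes of level `< δ` is small
  have hL : #{x : T | lev x < δ} < κ := by
    have hU : {x : T | lev x < δ} =
        ⋃ β : δ.ToType, {x : T | lev x = Ordinal.typein ((· < ·) : δ.ToType → δ.ToType → Prop) β} := by
      ext x
      simp only [Set.mem_setOf_eq, Set.mem_iUnion]
      constructor
      · intro hx
        obtain ⟨β, hβ⟩ := Ordinal.typein_surj ((· < ·) : δ.ToType → δ.ToType → Prop)
          (by rw [Ordinal.type_toType]; exact hx)
        exact ⟨β, hβ.symm⟩
      · rintro ⟨β, hβ⟩
        rw [hβ]
        have := Ordinal.typein_lt_type ((· < ·) : δ.ToType → δ.ToType → Prop) β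
        rwa [Ordinal.type_toType] at this
    rw [hU]
    refine (Cardinal.card_iUnion_lt_iff_forall_of_isRegular hreg ?_).2 fun β => hlev _
    rw [Cardinal.mk_toType]
    exact Cardinal.lt_ord.1 hδ
  set Z := {z : T × ℕ // lev z.1 < δ} with hZ
  haveI hZinf : Infinite Z := by
    refine Infinite.of_injective (fun n : ℕ => (⟨(x₀, n), hx₀⟩ : Z)) ?_
    intro a b h
    simpa using congrArg (fun z : Z => z.1.2) h
  have hZcard : #Z < κ := by
    have hinj : Function.Injective
        (fun z : Z => ((⟨z.1.1, z.2⟩ : {x : T | lev x < δ}), z.1.2)) := by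
      intro a b h
      obtain ⟨⟨a1, a2⟩, ha⟩ := a; obtain ⟨⟨b1, b2⟩, hb⟩ := b
      simp only [Prod.mk.injEq, Subtype.mk.injEq] at h
      obtain ⟨h1, h2⟩ := h
      subst h1; subst h2; rfl
    refine lt_of_le_of_lt (Cardinal.mk_le_of_injective hinj) ?_
    rw [Cardinal.mk_prod]
    simp only [Cardinal.lift_uzero, Cardinal.mk_nat, Cardinal.lift_aleph0]
    exact Cardinal.mul_lt_of_lt hreg.aleph0_le hL hunc
  have hfin : #(Plt (T := T) lev δ) ≤ #(Finset Z) := by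
    have hinj : Function.Injective
        (fun p : Plt (T := T) lev δ =>
          (p.1.1.subtype (fun z : T × ℕ => lev z.1 < δ) : Finset Z)) := by
      intro p q h
      have hp' : p.1.1.filter (fun z : T × ℕ => lev z.1 < δ) =
          q.1.1.filter (fun z : T × ℕ => lev z.1 < δ) := by
        have h2 := congrArg
          (Finset.map (Function.Embedding.subtype fun z : T × ℕ => lev z.1 < δ)) h
        rwa [Finset.subtype_map, Finset.subtype_map] at h2
      rw [Finset.filter_true_of_mem (fun z hz => p.2 z hz),
        Finset.filter_true_of_mem (fun z hz => q.2 z hz)] at hp'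
      exact Subtype.ext (Subtype.ext hp')
    exact Cardinal.mk_le_of_injective hinj
  calc #(Plt (T := T) lev δ) ≤ #(Finset Z) := hfin
    _ = #Z := Cardinal.mk_finset_of_infinite Z
    _ < κ := hZcard

end Aux

/-- the specialization forcing of a κ-Aronszajn tree is not
κ-stationarily layered. -/
theorem stmt_11 (κ : Cardinal.{u}) (hreg : κ.IsRegular) (hunc : ℵ₀ < κ)
    (T : Type u) [PartialOrder T] (lev : T → Ordinal.{u})
    (haron : Aronszajn κ T lev) :
    ¬ StationarilyLayered κ (SpecCond T) := by
  classical
  intro hstat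
  obtain ⟨hlevtree, hheight, hlevels, -⟩ := haron
  obtain ⟨-, hmono, -, hpred⟩ := hlevtree
  -- the club of suborders of the form `Plt lev δ` for `δ < κ.ord` limit
  have hclub : PkClub κ {S : Set (SpecCond T) |
      ∃ δ : Ordinal.{u}, Order.IsSuccLimit δ ∧ δ < κ.ord ∧ S = Plt lev δ} := by
    refine ⟨?_, ?_, ?_⟩
    · -- elements are small
      rintro c ⟨δ, hlim, hδ, rfl⟩
      refine ⟨Set.subset_univ _, ?_⟩
      obtain ⟨x₀, hx₀⟩ := hheight.2 0 hreg.ord_pos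
      exact mk_Plt_lt hreg hunc lev hlevels hδ x₀ (by rw [hx₀]; exact hlim.pos)
    · -- cofinality
      intro a _ ha
      set m : a → Ordinal.{u} := fun p => (p : SpecCond T).1.sup (fun z => lev z.1 + 1) with hm
      have hmlt : ∀ p : a, m p < κ.ord := by
        intro p
        refine (Finset.sup_lt_iff (show (⊥ : Ordinal.{u}) < κ.ord from hreg.ord_pos)).2 ?_
        intro z _
        rw [Ordinal.add_one_eq_succ]
        exact (Cardinal.isSuccLimit_ord hreg.aleph0_le).succ_lt (hheight.1 z.1)
      have hδ₀ : (⨆ p : a, m p) < κ.ord := by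
        refine Ordinal.iSup_lt_ord ?_ hmlt
        rwa [hreg.cof_eq]
      refine ⟨Plt lev ((⨆ p : a, m p) + Ordinal.omega0), ⟨_, ?_, ?_, rfl⟩, ?_⟩
      · exact Ordinal.isSuccLimit_add _ Ordinal.isSuccLimit_omega0
      · rw [Cardinal.lt_ord, Ordinal.card_add, Ordinal.card_omega0]
        exact Cardinal.add_lt_of_lt hreg.aleph0_le (Cardinal.lt_ord.1 hδ₀) hunc
      · intro p hp z hz
        have h1 : lev z.1 + 1 ≤ m ⟨p, hp⟩ :=
          Finset.le_sup (f := fun z : T × ℕ => lev z.1 + 1) hz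
        have h2 : m ⟨p, hp⟩ ≤ ⨆ p : a, m p := Ordinal.le_iSup _ _
        calc lev z.1 < lev z.1 + 1 := by
              rw [Ordinal.add_one_eq_succ]; exact Order.lt_succ _
          _ ≤ _ := h1.trans (h2.trans le_self_add)
    · -- closure under unions of chains
      intro D hDne hDC hcc hDcard
      have hD : ∀ c : D, ∃ δ : Ordinal.{u},
          Order.IsSuccLimit δ ∧ δ < κ.ord ∧ (c : Set (SpecCond T)) = Plt lev δ :=
        fun c => hDC c.2
      choose δc hlimc hltc heqc using hD
      have hδs : (⨆ c : D, δc c) < κ.ord :=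
        Ordinal.iSup_lt_ord (by rwa [hreg.cof_eq]) hltc
      have hmono' : ∀ (c c' : D), (c : Set (SpecCond T)) ⊆ (c' : Set (SpecCond T)) →
          ∀ x : T, lev x < δc c → lev x < δc c' := by
        intro c c' hsub x hx
        have h1 : sing x 0 ∈ (c : Set (SpecCond T)) := by
          rw [heqc c]; exact sing_mem_Plt.2 hx
        have h2 := hsub h1
        rw [heqc c'] at h2
        exact sing_mem_Plt.1 h2
      obtain ⟨c₀, hc₀⟩ := hDne
      have hlims : Order.IsSuccLimit (⨆ c : D, δc c) := by
        refine Ordinal.isSuccLimit_iff.2 ⟨?_, Order.isSuccPrelimit_of_succ_lt ?_⟩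
        · intro h0
          have h1 := Ordinal.le_iSup (fun c : D => δc c) ⟨c₀, hc₀⟩
          rw [h0] at h1
          exact (hlimc ⟨c₀, hc₀⟩).pos.ne' (nonpos_iff_eq_zero.1 h1)
        · intro β hβ
          rw [Ordinal.lt_iSup_iff] at hβ
          obtain ⟨c, hc⟩ := hβ
          exact lt_of_lt_of_le ((hlimc c).succ_lt hc) (Ordinal.le_iSup _ c)
      have hunion : ⋃₀ D = Plt lev (⨆ c : D, δc c) := by
        apply Set.Subset.antisymm
        · rintro p ⟨c, hc, hp⟩
          have hp2 : p ∈ ((⟨c, hc⟩ : D) : Set (SpecCond T)) := hp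
          rw [heqc ⟨c, hc⟩] at hp2
          intro z hz
          exact lt_of_lt_of_le (hp2 z hz) (Ordinal.le_iSup (fun c : D => δc c) ⟨c, hc⟩)
        · intro p hp
          have key : ∀ s : Finset (T × ℕ), (∀ z ∈ s, lev z.1 < ⨆ c : D, δc c) →
              ∃ c : D, ∀ z ∈ s, lev z.1 < δc c := by
            intro s
            induction s using Finset.induction_on with
            | empty => intro _; exact ⟨⟨c₀, hc₀⟩, by simp⟩
            | @insert a s hanotmem ih =>
              intro hall
              obtain ⟨c1, hc1⟩ := ih (fun z hz => hall z (Finset.mem_insert_of_mem hz))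
              have ha : lev a.1 < ⨆ c : D, δc c := hall a (Finset.mem_insert_self a s)
              rw [Ordinal.lt_iSup_iff] at ha
              obtain ⟨c2, hc2⟩ := ha
              by_cases he : (c1 : Set (SpecCond T)) = (c2 : Set (SpecCond T))
              · refine ⟨c2, fun z hz => ?_⟩
                rcases Finset.mem_insert.1 hz with hza | hz'
                · rw [hza]; exact hc2
                · exact hmono' c1 c2 (he ▸ Set.Subset.rfl) z.1 (hc1 z hz')
              · rcases hcc c1.2 c2.2 he with h | h
                · refine ⟨c2, fun z hz => ?_⟩
                  rcases Finset.mem_insert.1 hz with hza | hz'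
                  · rw [hza]; exact hc2
                  · exact hmono' c1 c2 h z.1 (hc1 z hz')
                · refine ⟨c1, fun z hz => ?_⟩
                  rcases Finset.mem_insert.1 hz with hza | hz'
                  · rw [hza]; exact hmono' c2 c1 h a.1 hc2
                  · exact hc1 z hz'
          obtain ⟨c, hc⟩ := key p.1 hp
          refine ⟨c, c.2, ?_⟩
          rw [heqc c]
          exact hc
      rw [hunion]
      exact ⟨_, hlims, hδs, rfl⟩
  obtain ⟨S, hSreg, hSC⟩ := hstat _ hclub
  obtain ⟨δ, hlim, hδ, rfl⟩ := hSC
  obtain ⟨t, ht⟩ := hheight.2 δ hδ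
  -- density of conditions incompatible with `sing t 0` in `Plt lev δ`
  have hdense : ∀ q, q ∈ Plt lev δ →
      ∃ r, r ∈ Plt lev δ ∧ r ≤ q ∧ ¬ Compat r (sing t 0) := by
    intro q hq
    by_cases hcase : ∃ u : T, (u, 0) ∈ q.1 ∧ u ≤ t
    · obtain ⟨u, hu, hut⟩ := hcase
      refine ⟨q, hq, le_refl q, ?_⟩
      have hune : u ≠ t := by
        intro h
        have h1 := hq _ hu
        rw [h, ht] at h1
        exact lt_irrefl _ h1
      exact incompat_of_pair hu (mem_sing t 0) hut hune
    · push_neg at hcase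
      set α := q.1.sup (fun z : T × ℕ => lev z.1 + 1) with hαdef
      have hα : α < δ := by
        refine (Finset.sup_lt_iff (show (⊥ : Ordinal.{u}) < δ from hlim.pos)).2 ?_
        intro z hz
        rw [Ordinal.add_one_eq_succ]
        exact hlim.succ_lt (hq z hz)
      have hqlt : ∀ z ∈ q.1, lev z.1 < α := by
        intro z hz
        have h1 : lev z.1 + 1 ≤ α :=
          Finset.le_sup (f := fun z : T × ℕ => lev z.1 + 1) hz
        rw [Ordinal.add_one_eq_succ] at h1
        exact Order.succ_le_iff.1 h1
      obtain ⟨s, hst, hlevs⟩ := hpred t α (by rw [ht]; exact hα)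
      have hsne : s ≠ t := by
        intro h
        apply hα.ne'
        rw [← hlevs, h]
        exact ht.symm
      have hsnot : ∀ n : ℕ, (s, n) ∉ q.1 := by
        intro n hn
        have h1 := hqlt (s, n) hn
        rw [hlevs] at h1
        exact lt_irrefl _ h1
      refine ⟨⟨insert (s, 0) q.1, ?_, ?_⟩, ?_, ?_, ?_⟩
      · -- functionality
        intro z1 hz1 z2 hz2 hfst
        rcases Finset.mem_insert.1 hz1 with h1 | h1 <;>
          rcases Finset.mem_insert.1 hz2 with h2 | h2
        · rw [h1, h2]
        · exfalso
          have hz : z2.1 = s := by rw [← hfst, h1]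
          have he : (s, z2.2) = z2 := by rw [← hz]
          exact hsnot z2.2 (he ▸ h2)
        · exfalso
          have hz : z1.1 = s := by rw [hfst, h2]
          have he : (s, z1.2) = z1 := by rw [← hz]
          exact hsnot z1.2 (he ▸ h1)
        · exact q.2.1 z1 h1 z2 h2 hfst
      · -- injectivity on chains
        intro z1 hz1 z2 hz2 hcmp hval
        rcases Finset.mem_insert.1 hz1 with h1 | h1 <;>
          rcases Finset.mem_insert.1 hz2 with h2 | h2
        · rw [h1, h2]
        · exfalso
          subst h1
          rcases hcmp with hc | hc
          · rcases lt_or_eq_of_le hc with hlt | heq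
            · have h3 := hmono _ _ hlt
              have h4 := hqlt z2 h2
              rw [← hlevs] at h4
              exact absurd h4 (not_lt_of_gt h3)
            · have he : (s, z2.2) = z2 := by
                show ((s, 0).1, z2.2) = z2
                rw [heq]
              exact hsnot z2.2 (he ▸ h2)
          · have he : (z2.1, 0) = z2 := by
              show (z2.1, (s, 0).2) = z2
              rw [hval]
            exact hcase z2.1 (he ▸ h2) (le_trans hc hst)
        · exfalso
          subst h2
          rcases hcmp with hc | hc
          · have he : (z1.1, 0) = z1 := by
              show (z1.1, (s, 0).2) = z1
              rw [← hval]
            exact hcase z1.1 (he ▸ h1) (le_trans hc hst)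
          · rcases lt_or_eq_of_le hc with hlt | heq
            · have h3 := hmono _ _ hlt
              have h4 := hqlt z1 h1
              rw [← hlevs] at h4
              exact absurd h4 (not_lt_of_gt h3)
            · have he : (s, z1.2) = z1 := by
                show ((s, 0).1, z1.2) = z1
                rw [heq]
              exact hsnot z1.2 (he ▸ h1)
        · exact q.2.2 z1 h1 z2 h2 hcmp hval
      · -- membership in the suborder
        intro z hz
        rcases Finset.mem_insert.1 hz with h | h
        · rw [h]
          show lev s < δ
          rw [hlevs]; exact hα
        · exact hq z h
      · exact Finset.subset_insert _ _
      · exact incompat_of_pair (Finset.mem_insert_self _ _) (mem_sing t 0) hst hsne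
  -- a maximal antichain of the suborder consisting of conditions incompatible with `sing t 0`
  have hempty : (emptyCond T) ∈ Plt lev δ :=
    fun z hz => absurd hz (Finset.notMem_empty z)
  obtain ⟨r₀, hr₀P, -, hr₀inc⟩ := hdense (emptyCond T) hempty
  set Dd : Set (SpecCond T) := {r | r ∈ Plt lev δ ∧ ¬ Compat r (sing t 0)} with hDd
  set 𝒜 : Set (Set (SpecCond T)) :=
    {A | A ⊆ Dd ∧ ∀ x ∈ A, ∀ y ∈ A, x ≠ y → ¬ CompatIn (Plt lev δ) x y} with h𝒜
  have hchains : ∀ c ⊆ 𝒜, IsChain (· ⊆ ·) c → c.Nonempty →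
      ∃ ub ∈ 𝒜, ∀ s ∈ c, s ⊆ ub := by
    intro c hc hccc _
    refine ⟨⋃₀ c, ⟨?_, ?_⟩, fun s hs => Set.subset_sUnion_of_mem hs⟩
    · rintro x ⟨A, hA, hx⟩
      exact (hc hA).1 hx
    · rintro x ⟨A, hA, hx⟩ y ⟨B, hB, hy⟩ hne
      rcases eq_or_ne A B with rfl | hAB
      · exact (hc hA).2 x hx y hy hne
      · rcases hccc hA hB hAB with h | h
        · exact (hc hB).2 x (h hx) y hy hne
        · exact (hc hA).2 x hx y (h hy) hne
  have hsingle : {r₀} ∈ 𝒜 := by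
    constructor
    · intro x hx
      rw [Set.mem_singleton_iff] at hx
      rw [hx]
      exact ⟨hr₀P, hr₀inc⟩
    · intro x hx y hy hne
      rw [Set.mem_singleton_iff] at hx hy
      exact absurd (hx.trans hy.symm) hne
  obtain ⟨A, -, hAmax⟩ := zorn_subset_nonempty 𝒜 hchains {r₀} hsingle
  have hA𝒜 : A ∈ 𝒜 := hAmax.1
  have hAsub : A ⊆ Plt lev δ := fun x hx => (hA𝒜.1 hx).1
  -- A is predense in the suborder
  have hpre : ∀ q ∈ Plt lev δ, ∃ b ∈ A, CompatIn (Plt lev δ) q b := by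
    intro q hq
    obtain ⟨r, hrP, hrq, hrinc⟩ := hdense q hq
    by_cases hrA : r ∈ A
    · exact ⟨r, hrA, ⟨r, hrP, hrq, le_refl r⟩⟩
    · have hun : A ∪ {r} ∉ 𝒜 := by
        intro h
        exact hrA (hAmax.2 h Set.subset_union_left (Set.mem_union_right _ rfl))
      have hsubD : A ∪ {r} ⊆ Dd :=
        Set.union_subset hA𝒜.1 (Set.singleton_subset_iff.2 ⟨hrP, hrinc⟩)
      have hnot : ¬ ∀ x ∈ A ∪ {r}, ∀ y ∈ A ∪ {r}, x ≠ y → ¬ CompatIn (Plt lev δ) x y :=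
        fun h => hun ⟨hsubD, h⟩
      push_neg at hnot
      obtain ⟨x, hx, y, hy, hne, hcomp⟩ := hnot
      obtain ⟨w, hwP, hwx, hwy⟩ := hcomp
      rcases hx with hxA | hxr <;> rcases hy with hyA | hyr
      · exact absurd ⟨w, hwP, hwx, hwy⟩ (hA𝒜.2 x hxA y hyA hne)
      · rw [Set.mem_singleton_iff] at hyr
        subst hyr
        exact ⟨x, hxA, ⟨w, hwP, hwy.trans hrq, hwx⟩⟩
      · rw [Set.mem_singleton_iff] at hxr
        subst hxr
        exact ⟨y, hyA, ⟨w, hwP, hwx.trans hrq, hwy⟩⟩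
      · rw [Set.mem_singleton_iff] at hxr hyr
        exact absurd (hxr.trans hyr.symm) hne
  -- apply regularity to get a contradiction
  obtain ⟨b, hbA, hbcomp⟩ := hSreg.1.2 A hAsub hA𝒜.2 hpre (sing t 0)
  obtain ⟨w, hw1, hw2⟩ := hbcomp
  exact (hA𝒜.1 hbA).2 ⟨w, hw2, hw1⟩

end Layered
end

section
/- Let κ be an uncountable regular cardinal, T a tree of height κ, and S ⊆ κ a stationary set that is nonstationary with respect to T. Then T has no cofinal branches. -/
universe u v

open Cardinal

namespace Layered

variable {P : Type u}

/-- A club (closed unbounded set) in an ordinal `o`. -/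
def ClubInOrd (o : Ordinal.{u}) (C : Set Ordinal.{u}) : Prop :=
  C ⊆ Set.Iio o ∧ (∀ α < o, ∃ β ∈ C, α < β) ∧
  ∀ α < o, α ≠ 0 → (∀ β < α, ∃ γ ∈ C, β < γ ∧ γ < α) → α ∈ C

/-- A stationary subset of an ordinal `o`. -/
def StatInOrd (o : Ordinal.{u}) (S : Set Ordinal.{u}) : Prop :=
  S ⊆ Set.Iio o ∧ ∀ C : Set Ordinal.{u}, ClubInOrd o C → (S ∩ C).Nonempty

/-- if a stationary subset of κ is nonstationary with respect to a tree of
height κ, then the tree has no cofinal branches. -/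
theorem stmt_13 (κ : Cardinal.{u}) (hreg : κ.IsRegular) (hunc : ℵ₀ < κ)
    (T : Type u) [PartialOrder T] (lev : T → Ordinal.{u})
    (htree : IsLeveledTree T lev) (hht : HasHeight T lev κ.ord)
    (S : Set Ordinal.{u}) (hstat : StatInOrd κ.ord S)
    (hns : NonstatWrt κ T lev S) :
    ¬ ∃ B : Set T, CofinalBranch T lev κ.ord B := by
  rintro ⟨B, hdc, hch, hB⟩
  classical
  obtain ⟨r, hr, hc⟩ := hns
  have _inst : Nonempty T := ⟨htree.1.choose⟩
  choose! t htB htlev using hB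
  choose μf hμf cf hcf using hc
  have hcof : κ.ord.cof = κ := hreg.cof_eq
  have hlim : Order.IsSuccLimit κ.ord := Cardinal.isSuccLimit_ord hunc.le
  have hmono : ∀ u v : T, u < v → lev u < lev v := htree.2.1
  -- nodes of the branch on the same level coincide
  have huniq : ∀ u ∈ B, ∀ v ∈ B, lev u = lev v → u = v := by
    intro u hu v hv he
    by_contra hne
    rcases hch hu hv hne with h | h
    · exact absurd he (ne_of_lt (hmono u v (lt_of_le_of_ne h hne)))
    · exact absurd he.symm (ne_of_lt (hmono v u (lt_of_le_of_ne h (Ne.symm hne))))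
  -- regressiveness on the branch
  have hreg' : ∀ α, α < κ.ord → α ∈ S → 0 < α → r (t α) < t α := by
    intro α hα hαS h0
    apply hr
    · rw [htlev α hα]; exact hαS
    · obtain ⟨s, hs, hlev0⟩ := htree.2.2.2 (t α) 0 (by rw [htlev α hα]; exact h0)
      refine ⟨s, lt_of_le_of_ne hs ?_⟩
      intro h
      rw [h, htlev α hα] at hlev0
      exact h0.ne' hlev0
  -- the fibers
  set Sb : Ordinal.{u} → Set Ordinal.{u} :=
    fun β => {α : Ordinal | α < κ.ord ∧ α ∈ S ∧ 0 < α ∧ lev (r (t α)) = β} with hSb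
  have hSblt : ∀ β α, α ∈ Sb β → β < α := by
    intro β α ⟨hα, hαS, h0, hβ⟩
    have h := hmono _ _ (hreg' α hα hαS h0)
    rwa [hβ, htlev α hα] at h
  -- on the fiber over β, r (t α) is the branch node t β
  have hnode : ∀ β α, α ∈ Sb β → r (t α) = t β := by
    intro β α hmem
    obtain ⟨hα, hαS, h0, hβ⟩ := hmem
    have hβκ : β < κ.ord := (hSblt β α ⟨hα, hαS, h0, hβ⟩).trans hα
    refine huniq _ ?_ _ (htB β hβκ) ?_
    · exact hdc _ (htB α hα) _ (le_of_lt (hreg' α hα hαS h0))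
    · rw [hβ, htlev β hβκ]
  -- the colouring is injective on the fiber
  have hinj : ∀ β, ∀ α₁ ∈ Sb β, ∀ α₂ ∈ Sb β,
      cf (t β) (t α₁) = cf (t β) (t α₂) → α₁ = α₂ := by
    intro β α₁ h₁ α₂ h₂ hcc
    have hS₁ : lev (t α₁) ∈ S := by rw [htlev α₁ h₁.1]; exact h₁.2.1
    have hS₂ : lev (t α₂) ∈ S := by rw [htlev α₂ h₂.1]; exact h₂.2.1
    have hcomp : t α₁ ≤ t α₂ ∨ t α₂ ≤ t α₁ := by
      by_cases he : t α₁ = t α₂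
      · exact Or.inl he.le
      · rcases hch (htB α₁ h₁.1) (htB α₂ h₂.1) he with h | h
        exacts [Or.inl h, Or.inr h]
    have : t α₁ = t α₂ := by
      rcases hcomp with h | h
      · exact hcf (t β) (t α₁) (t α₂) hS₁ hS₂ (hnode β α₁ h₁) (hnode β α₂ h₂) h hcc
      · exact (hcf (t β) (t α₂) (t α₁) hS₂ hS₁ (hnode β α₂ h₂) (hnode β α₁ h₁) h hcc.symm).symm
    rw [← htlev α₁ h₁.1, ← htlev α₂ h₂.1, this]
  -- a bound for each fiber
  set F : (β : Ordinal.{u}) → (μf (t β)).ord.ToType → Ordinal.{u} := fun β x =>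
    if h : ∃ α, α ∈ Sb β ∧ cf (t β) (t α) = x then h.choose else 0 with hF
  set g : Ordinal.{u} → Ordinal.{u} := fun β => ⨆ x, F β x with hg
  have hle : ∀ β, ∀ α ∈ Sb β, α ≤ g β := by
    intro β α hα
    have hex : ∃ α', α' ∈ Sb β ∧ cf (t β) (t α') = cf (t β) (t α) := ⟨α, hα, rfl⟩
    have h1 : F β (cf (t β) (t α)) = α := by
      rw [hF]; simp only [hex, dif_pos]
      exact hinj β _ hex.choose_spec.1 α hα hex.choose_spec.2
    calc α = F β (cf (t β) (t α)) := h1.symm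
      _ ≤ g β := le_ciSup (Ordinal.bddAbove_range _) _
  have hglt : ∀ β, β < κ.ord → g β < κ.ord := by
    intro β hβ
    refine Ordinal.iSup_lt_ord ?_ ?_
    · rw [Cardinal.mk_ord_toType, hcof]; exact hμf (t β)
    · intro x
      rw [hF]
      dsimp only
      split
      · next h => exact h.choose_spec.1.1
      · exact hlim.pos
  -- the club of closure points of g
  set C : Set Ordinal.{u} := {α | α < κ.ord ∧ 0 < α ∧ ∀ β < α, g β < α} with hC
  have hclub : ClubInOrd κ.ord C := by
    refine ⟨fun α h => h.1, ?_, ?_⟩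
    · -- unbounded
      intro α₀ hα₀
      set f : ℕ → Ordinal.{u} := fun n =>
        Nat.rec (Order.succ α₀) (fun _ γ => (Order.succ γ) ⊔ Ordinal.bsup γ (fun β _ => Order.succ (g β))) n with hf
      have hfκ : ∀ n, f n < κ.ord := by
        intro n
        induction n with
        | zero => exact hlim.succ_lt hα₀
        | succ n ih =>
          refine max_lt (hlim.succ_lt ih) (Ordinal.bsup_lt_ord ?_ ?_)
          · rw [hcof]; exact Cardinal.lt_ord.mp ih
          · intro i hi; exact hlim.succ_lt (hglt i (hi.trans ih))
      have hbdd : BddAbove (Set.range f) := Ordinal.bddAbove_range _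
      refine ⟨⨆ n, f n, ⟨?_, ?_, ?_⟩, ?_⟩
      · refine Ordinal.iSup_lt_ord_lift ?_ hfκ
        rw [Cardinal.mk_nat, Cardinal.lift_aleph0, hcof]
        exact hunc
      · exact lt_of_lt_of_le ((zero_le (a := α₀)).trans_lt (Order.lt_succ α₀)) (le_ciSup hbdd 0)
      · intro β hβ
        obtain ⟨n, hn⟩ := Ordinal.lt_iSup_iff.mp hβ
        have h2 : Order.succ (g β) ≤ f (n + 1) :=
          le_trans (Ordinal.le_bsup (fun β _ => Order.succ (g β)) β hn) (le_max_right _ _)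
        exact lt_of_lt_of_le (lt_of_lt_of_le (Order.lt_succ (g β)) h2) (le_ciSup hbdd (n + 1))
      · exact lt_of_lt_of_le (Order.lt_succ α₀) (le_ciSup hbdd 0)
    · -- closed
      intro α hα hα0 hcl
      refine ⟨hα, pos_iff_ne_zero.mpr hα0, ?_⟩
      intro β hβ
      obtain ⟨γ, hγC, hβγ, hγα⟩ := hcl β hβ
      exact lt_trans (hγC.2.2 β hβγ) hγα
  -- contradiction with stationarity
  obtain ⟨α, hαS, hαC⟩ := hstat.2 C hclub
  obtain ⟨hακ, hα0, hαcl⟩ := hαC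
  set β := lev (r (t α)) with hβ
  have hmem : α ∈ Sb β := ⟨hακ, hαS, hα0, rfl⟩
  have h1 : α ≤ g β := hle β α hmem
  have h2 : g β < α := hαcl β (hSblt β α hmem)
  exact absurd h1 (not_le.mpr h2)

end Layered
end
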